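/- arXiv:1504.04220 — 10 statements merged into one kernel-verified Lean document; each statement's English description precedes it below -/
import Mathlib

section
/- Let λ₀ = inf{λ > 0 : (16/λ²)‖Wf‖² + (8m/λ)⟨Kf,f⟩ ≤ ‖f‖² for all f ∈ ℋ}. If K ≠ 0, then 2 < 4(m‖K‖ + √(m²‖K‖² + 1/4)) ≤ λ₀ ≤ 4(m‖K‖ + √(m²‖K‖² + ‖W‖²)). In particular the defining set is nonempty, so λ₀ is a well-defined positive real number. -/
lemma discrimAux {a b c : ℝ} (hc : 0 ≤ c)
    (h : ∀ t : ℝ, 0 ≤ a + 2 * b * t + c * t ^ 2) : b ^ 2 ≤ a * c := by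
  rcases eq_or_lt_of_le hc with hc0 | hc0
  · have hb : b = 0 := by
      by_contra hb
      have h1 := h (-(a + 1) / (2 * b))
      rw [← hc0] at h1
      field_simp at h1
      have hb2 : (0:ℝ) < b ^ 2 := lt_of_le_of_ne (sq_nonneg b) (Ne.symm (pow_ne_zero 2 hb))
      rw [le_div_iff₀ hb2] at h1
      nlinarith
    have := h 0
    nlinarith
  · have h1 := h (-b / c)
    have : a + 2 * b * (-b / c) + c * (-b / c) ^ 2 = a - b ^ 2 / c := by
      field_simp; ring
    rw [this] at h1
    rw [sub_nonneg, div_le_iff₀ hc0] at h1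
    linarith

lemma normLeOfForm {H : Type*} [NormedAddCommGroup H] [InnerProductSpace ℂ H] [CompleteSpace H]
    (K : H →L[ℂ] H) (hK : IsSelfAdjoint K)
    (hpos : ∀ f : H, 0 ≤ (inner ℂ (K f) f : ℂ).re) (c : ℝ) (hc : 0 ≤ c)
    (hb : ∀ f : H, (inner ℂ (K f) f : ℂ).re ≤ c * ‖f‖ ^ 2) : ‖K‖ ≤ c := by
  have hsym : ∀ a b : H, (inner ℂ (K a) b : ℂ) = inner ℂ a (K b) := fun a b => hK.isSymmetric a b
  apply ContinuousLinearMap.opNorm_le_bound _ hc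
  intro x
  rcases eq_or_ne (K x) 0 with h0 | h0
  · simp [h0]; positivity
  set y := K x with hy
  have expand : ∀ t : ℝ, (inner ℂ (K (x + (t:ℂ) • y)) (x + (t:ℂ) • y) : ℂ).re
      = (inner ℂ (K x) x : ℂ).re + 2 * (inner ℂ (K x) y : ℂ).re * t
        + (inner ℂ (K y) y : ℂ).re * t ^ 2 := by
    intro t
    have hKyx : (inner ℂ (K y) x : ℂ) = starRingEnd ℂ (inner ℂ (K x) y) := by
      rw [hsym y x]; exact (inner_conj_symm y (K x)).symm
    rw [map_add, map_smul, inner_add_left, inner_add_right, inner_add_right,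
      inner_smul_left, inner_smul_right, inner_smul_right, inner_smul_left, hKyx]
    simp [Complex.add_re, Complex.mul_re, Complex.conj_re, Complex.conj_im,
      Complex.ofReal_re, Complex.ofReal_im]
    ring
  have hcs : ((inner ℂ (K x) y : ℂ).re) ^ 2
      ≤ (inner ℂ (K x) x : ℂ).re * (inner ℂ (K y) y : ℂ).re := by
    apply discrimAux (hpos y)
    intro t
    have := hpos (x + (t:ℂ) • y)
    rw [expand t] at this
    linarith
  have hxy : (inner ℂ (K x) y : ℂ).re = ‖K x‖ ^ 2 :=
    inner_self_eq_norm_sq (𝕜 := ℂ) (K x)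
  have h1 := hb x
  have h2 := hb y
  have hKx : 0 < ‖K x‖ := norm_pos_iff.mpr h0
  have hyn : ‖y‖ = ‖K x‖ := rfl
  rw [hxy] at hcs
  rw [hyn] at h2
  have h3 : (inner ℂ (K x) x : ℂ).re * (inner ℂ (K y) y : ℂ).re ≤ (c * ‖x‖ ^ 2) * (c * ‖K x‖ ^ 2) :=
    mul_le_mul h1 h2 (hpos y) (by positivity)
  have ha : 0 < ‖K x‖ ^ 2 := by positivity
  have h5 : ‖K x‖ ^ 2 ≤ (c * ‖x‖) ^ 2 := by nlinarith [hcs, h3, ha]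
  calc ‖y‖ = ‖K x‖ := hyn
    _ ≤ c * ‖x‖ := le_of_pow_le_pow_left₀ two_ne_zero (by positivity) h5

set_option maxHeartbeats 1000000

/-- Setting: a complex Hilbert space `ℋ` with bounded self-adjoint operators
`U, K, W` such that `U² = 1`, `K` is positive, the anticommutator `(UK)(UW) + (UW)(UK) = 0`
and `(UW)² = -(1/4)·Id`, and `m > 0`.  Let
`λ₀ = inf {λ > 0 : (16/λ²)‖Wf‖² + (8m/λ)⟨Kf,f⟩ ≤ ‖f‖² for all f}`.  If `K ≠ 0` then the
defining set is nonempty and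
`2 < 4(m‖K‖ + √(m²‖K‖² + 1/4)) ≤ λ₀ ≤ 4(m‖K‖ + √(m²‖K‖² + ‖W‖²))`. -/
theorem statement0
    {H : Type*} [NormedAddCommGroup H] [InnerProductSpace ℂ H] [CompleteSpace H]
    (U K W : H →L[ℂ] H) (m : ℝ) (hm : 0 < m)
    (hU : IsSelfAdjoint U) (hK : IsSelfAdjoint K) (hW : IsSelfAdjoint W)
    (hU2 : U ∘L U = 1)
    (hKpos : ∀ f : H, 0 ≤ (inner ℂ (K f) f : ℂ).re)
    (hanti : (U ∘L K) ∘L (U ∘L W) + (U ∘L W) ∘L (U ∘L K) = 0)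
    (hUW2 : (U ∘L W) ∘L (U ∘L W) = -((1/4 : ℂ) • (1 : H →L[ℂ] H)))
    (hKne : K ≠ 0)
    (S : Set ℝ)
    (hS : S = {l : ℝ | 0 < l ∧ ∀ f : H,
      (16 / l ^ 2) * ‖W f‖ ^ 2 + (8 * m / l) * (inner ℂ (K f) f : ℂ).re ≤ ‖f‖ ^ 2}) :
    S.Nonempty ∧
      2 < 4 * (m * ‖K‖ + Real.sqrt (m ^ 2 * ‖K‖ ^ 2 + 1 / 4)) ∧
      4 * (m * ‖K‖ + Real.sqrt (m ^ 2 * ‖K‖ ^ 2 + 1 / 4)) ≤ sInf S ∧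
      sInf S ≤ 4 * (m * ‖K‖ + Real.sqrt (m ^ 2 * ‖K‖ ^ 2 + ‖W‖ ^ 2)) := by
  have hUsym : ∀ a b : H, (inner ℂ (U a) b : ℂ) = inner ℂ a (U b) := fun a b => hU.isSymmetric a b
  have hWsym : ∀ a b : H, (inner ℂ (W a) b : ℂ) = inner ℂ a (W b) := fun a b => hW.isSymmetric a b
  have hUpt : ∀ f : H, U (U f) = f := by
    intro f
    have := ContinuousLinearMap.ext_iff.mp hU2 f
    simpa using this
  have hUnorm : ∀ f : H, ‖U f‖ = ‖f‖ := by
    intro f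
    have h1 : (inner ℂ (U f) (U f) : ℂ) = inner ℂ f f := by rw [hUsym, hUpt]
    have h2 : ‖U f‖ ^ 2 = ‖f‖ ^ 2 := by
      have := inner_self_eq_norm_sq (𝕜 := ℂ) (U f)
      have h3 := inner_self_eq_norm_sq (𝕜 := ℂ) f
      rw [← this, ← h3, h1]
    exact le_of_pow_le_pow_left₀ two_ne_zero (norm_nonneg f) h2.le |>.antisymm
      (le_of_pow_le_pow_left₀ two_ne_zero (norm_nonneg _) h2.ge)
  have hWUW : ∀ f : H, W (U (W f)) = -((1/4 : ℂ)) • U f := by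
    intro f
    have h := ContinuousLinearMap.ext_iff.mp hUW2 f
    simp only [ContinuousLinearMap.comp_apply, ContinuousLinearMap.neg_apply,
      ContinuousLinearMap.smul_apply, ContinuousLinearMap.one_apply] at h
    have h2 := congrArg U h
    rw [hUpt] at h2
    rw [h2, map_neg, map_smul]
    simp
  have hAnti : ∀ f : H, K (U (W f)) = - W (U (K f)) := by
    intro f
    have h := ContinuousLinearMap.ext_iff.mp hanti f
    simp only [ContinuousLinearMap.add_apply, ContinuousLinearMap.comp_apply,
      ContinuousLinearMap.zero_apply] at h
    have h1 : U (K (U (W f))) = - U (W (U (K f))) := eq_neg_of_add_eq_zero_left h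
    have h2 := congrArg U h1
    rw [hUpt, map_neg, hUpt] at h2
    exact h2
  -- key identities
  have hKey : ∀ f : H, (inner ℂ (K (U (W f))) (U (W f)) : ℂ).re
      = (1/4) * (inner ℂ (K f) f : ℂ).re := by
    intro f
    have h : (inner ℂ (K (U (W f))) (U (W f)) : ℂ) = (1/4 : ℂ) * inner ℂ (K f) f := by
      rw [hAnti, inner_neg_left, hWsym, hWUW, inner_smul_right, hUsym, hUpt]
      ring
    rw [h]
    have : ((1/4 : ℂ) * inner ℂ (K f) f).re = (1/4) * (inner ℂ (K f) f : ℂ).re := by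
      rw [Complex.mul_re]
      norm_num
    exact this
  have hWnormUW : ∀ f : H, ‖W (U (W f))‖ = (1/4) * ‖f‖ := by
    intro f
    rw [hWUW, norm_smul, hUnorm]
    norm_num
  have hKnorm : 0 < ‖K‖ := by
    rcases eq_or_lt_of_le (norm_nonneg K) with h | h
    · exact absurd (norm_eq_zero.mp h.symm) hKne
    · exact h
  obtain ⟨f0, hf0⟩ : ∃ f : H, f ≠ 0 := by
    by_contra hcon
    push_neg at hcon
    exact hKne (by ext f; simp [hcon f])
  set a := m * ‖K‖ with ha
  have ha0 : 0 < a := mul_pos hm hKnorm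
  -- lower bound for each element of S
  have hMem : ∀ l ∈ S, 4 * (a + Real.sqrt (m ^ 2 * ‖K‖ ^ 2 + 1 / 4)) ≤ l := by
    rw [hS]
    rintro l ⟨hl, hcond⟩
    have h2 : ∀ f : H, (1 / l ^ 2) * ‖f‖ ^ 2 + (2 * m / l) * (inner ℂ (K f) f : ℂ).re
        ≤ ‖W f‖ ^ 2 := by
      intro f
      have h := hcond (U (W f))
      rw [hWnormUW f, hKey f, hUnorm (W f)] at h
      have e1 : (16 / l ^ 2) * ((1/4) * ‖f‖) ^ 2 = (1 / l ^ 2) * ‖f‖ ^ 2 := by ring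
      have e2 : (8 * m / l) * ((1/4) * (inner ℂ (K f) f : ℂ).re)
          = (2 * m / l) * (inner ℂ (K f) f : ℂ).re := by ring
      rw [e1, e2] at h
      exact h
    have h3 : ∀ f : H, 8 * m * l * (l ^ 2 + 4) * (inner ℂ (K f) f : ℂ).re
        ≤ (l ^ 4 - 16) * ‖f‖ ^ 2 := by
      intro f
      have hA := hcond f
      have hB := h2 f
      have hl2 : (0:ℝ) < l ^ 2 := by positivity
      have hC : (16 / l ^ 2) * ((1 / l ^ 2) * ‖f‖ ^ 2 + (2 * m / l) * (inner ℂ (K f) f : ℂ).re)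
          ≤ (16 / l ^ 2) * ‖W f‖ ^ 2 := by
        apply mul_le_mul_of_nonneg_left hB (by positivity)
      have hD : (16 / l ^ 4) * ‖f‖ ^ 2 + (32 * m / l ^ 3) * (inner ℂ (K f) f : ℂ).re
          + (8 * m / l) * (inner ℂ (K f) f : ℂ).re ≤ ‖f‖ ^ 2 := by
        have e : (16 / l ^ 2) * ((1 / l ^ 2) * ‖f‖ ^ 2 + (2 * m / l) * (inner ℂ (K f) f : ℂ).re)
            = (16 / l ^ 4) * ‖f‖ ^ 2 + (32 * m / l ^ 3) * (inner ℂ (K f) f : ℂ).re := by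
          field_simp
          ring
        rw [e] at hC
        linarith
      have hln : l ≠ 0 := ne_of_gt hl
      have hE := mul_le_mul_of_nonneg_left hD (by positivity : (0:ℝ) ≤ l ^ 4)
      have e2 : l ^ 4 * ((16 / l ^ 4) * ‖f‖ ^ 2 + (32 * m / l ^ 3) * (inner ℂ (K f) f : ℂ).re
          + (8 * m / l) * (inner ℂ (K f) f : ℂ).re)
          = 16 * ‖f‖ ^ 2 + 32 * m * l * (inner ℂ (K f) f : ℂ).re
            + 8 * m * l ^ 3 * (inner ℂ (K f) f : ℂ).re := by
        field_simp
      rw [e2] at hE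
      nlinarith [hE]
    have hf0n : (0:ℝ) < ‖f0‖ ^ 2 := by
      have := norm_pos_iff.mpr hf0
      positivity
    have hl2 : 2 ≤ l := by
      have h := h3 f0
      have hKp := hKpos f0
      have hnn : (0:ℝ) ≤ 8 * m * l * (l ^ 2 + 4) := by positivity
      have h0 : (0:ℝ) ≤ (l ^ 4 - 16) * ‖f0‖ ^ 2 := le_trans (mul_nonneg hnn hKp) h
      have hl4 : (16:ℝ) ≤ l ^ 4 := by nlinarith [h0, hf0n]
      have hp : (0:ℝ) < l ^ 2 + 4 := by positivity
      have hl2' : (4:ℝ) ≤ l ^ 2 := by nlinarith [hl4, hp]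
      have hp2 : (0:ℝ) < l + 2 := by linarith
      nlinarith [hl2', hp2]
    have hnK : ‖K‖ ≤ (l ^ 2 - 4) / (8 * m * l) := by
      apply normLeOfForm K hK hKpos
      · apply div_nonneg (by nlinarith) (by positivity)
      · intro f
        have h := h3 f
        rw [div_mul_eq_mul_div, le_div_iff₀ (by positivity : (0:ℝ) < 8 * m * l)]
        have hpos4 : (0:ℝ) < l ^ 2 + 4 := by positivity
        nlinarith [h, hpos4]
    have hq : 8 * m * ‖K‖ * l ≤ l ^ 2 - 4 := by
      have := (le_div_iff₀ (by positivity : (0:ℝ) < 8 * m * l)).mp hnK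
      nlinarith [this]
    have hla : 4 * a ≤ l := by
      rw [ha]
      nlinarith [hq, hl, mul_pos hl hl, hKnorm, hm]
    have ea : m ^ 2 * ‖K‖ ^ 2 = a ^ 2 := by rw [ha]; ring
    have h16 : 16 * (a ^ 2 + 1 / 4) ≤ (l - 4 * a) ^ 2 := by
      rw [ha]; nlinarith [hq]
    have hcalc : 4 * Real.sqrt (m ^ 2 * ‖K‖ ^ 2 + 1 / 4) ≤ l - 4 * a := by
      rw [ea]
      calc 4 * Real.sqrt (a ^ 2 + 1 / 4) = Real.sqrt (16 * (a ^ 2 + 1 / 4)) := by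
            rw [show (16:ℝ) * (a ^ 2 + 1 / 4) = 4 ^ 2 * (a ^ 2 + 1 / 4) by ring,
              Real.sqrt_mul (by positivity), Real.sqrt_sq (by norm_num)]
        _ ≤ Real.sqrt ((l - 4 * a) ^ 2) := Real.sqrt_le_sqrt h16
        _ = l - 4 * a := Real.sqrt_sq (by linarith)
    linarith
  -- upper bound: membership of L
  set s := Real.sqrt (m ^ 2 * ‖K‖ ^ 2 + ‖W‖ ^ 2) with hsdef
  have hssq : s ^ 2 = a ^ 2 + ‖W‖ ^ 2 := by
    rw [hsdef, Real.sq_sqrt (by positivity), ha]; ring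
  have hsn : (0:ℝ) ≤ s := Real.sqrt_nonneg _
  set L := 4 * (a + s) with hLdef
  have hL0 : (0:ℝ) < L := by rw [hLdef]; linarith
  have hLsq : L ^ 2 = 16 * ‖W‖ ^ 2 + 8 * a * L := by
    rw [hLdef]; linear_combination 16 * hssq
  have hLS : L ∈ S := by
    rw [hS]
    refine ⟨hL0, fun f => ?_⟩
    have hW1 : ‖W f‖ ≤ ‖W‖ * ‖f‖ := W.le_opNorm f
    have hK1 : (inner ℂ (K f) f : ℂ).re ≤ ‖K‖ * ‖f‖ ^ 2 := by
      calc (inner ℂ (K f) f : ℂ).re ≤ ‖(inner ℂ (K f) f : ℂ)‖ := Complex.re_le_norm _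
        _ = ‖(inner ℂ (K f) f : ℂ)‖ := rfl
        _ ≤ ‖K f‖ * ‖f‖ := norm_inner_le_norm _ _
        _ ≤ ‖K‖ * ‖f‖ * ‖f‖ := by gcongr; exact K.le_opNorm f
        _ = ‖K‖ * ‖f‖ ^ 2 := by ring
    have hWf2 : ‖W f‖ ^ 2 ≤ ‖W‖ ^ 2 * ‖f‖ ^ 2 := by
      nlinarith [norm_nonneg (W f), norm_nonneg f, norm_nonneg W, hW1]
    have step : (16 / L ^ 2) * ‖W f‖ ^ 2 + (8 * m / L) * (inner ℂ (K f) f : ℂ).re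
        ≤ (16 / L ^ 2) * (‖W‖ ^ 2 * ‖f‖ ^ 2) + (8 * m / L) * (‖K‖ * ‖f‖ ^ 2) :=
      add_le_add (mul_le_mul_of_nonneg_left hWf2 (by positivity))
        (mul_le_mul_of_nonneg_left hK1 (by positivity))
    have final : (16 / L ^ 2) * (‖W‖ ^ 2 * ‖f‖ ^ 2) + (8 * m / L) * (‖K‖ * ‖f‖ ^ 2)
        = ‖f‖ ^ 2 := by
      have hLne : L ≠ 0 := ne_of_gt hL0
      have e : (16 / L ^ 2) * (‖W‖ ^ 2 * ‖f‖ ^ 2) + (8 * m / L) * (‖K‖ * ‖f‖ ^ 2)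
          = ((16 * ‖W‖ ^ 2 + 8 * a * L) / L ^ 2) * ‖f‖ ^ 2 := by
        rw [ha]; field_simp
      rw [e, ← hLsq, div_self (pow_ne_zero 2 hLne), one_mul]
    linarith [step, final]
  have hSne : S.Nonempty := ⟨L, hLS⟩
  have hbdd : BddBelow S := ⟨0, by rw [hS]; rintro x ⟨hx, -⟩; exact hx.le⟩
  have hhalf : (1/2:ℝ) ≤ Real.sqrt (m ^ 2 * ‖K‖ ^ 2 + 1 / 4) := by
    rw [show (1/2:ℝ) = Real.sqrt ((1/2) ^ 2) from (Real.sqrt_sq (by norm_num)).symm]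
    apply Real.sqrt_le_sqrt
    nlinarith [sq_nonneg (m * ‖K‖)]
  exact ⟨hSne, by linarith, le_csInf hSne hMem, csInf_le hbdd hLS⟩
end

section
/- For every real λ ≠ 0 the following are equivalent: (a) there exists a nonzero pair (u,h) ∈ ℋ ⊕ ℋ with 2mKu + Wh = −u/λ and Wu = −h/λ (i.e. ker(1/λ + C⁺) ≠ 0); (b) there exists a nonzero f ∈ ℋ with (8m/λ)Kf + (16/λ²)W²f = f. -/
/-- In the shell-interaction setting, define `C⁺` on `ℋ ⊕ ℋ` by
`C⁺(u,h) = (2mKu + Wh, Wu)`.  For every real `λ ≠ 0` the following are equivalent: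
(a) there is a nonzero pair `(u,h)` with `2mKu + Wh = -u/λ` and `Wu = -h/λ`
    (i.e. `ker(1/λ + C⁺) ≠ 0`);
(b) there is a nonzero `f` with `(8m/λ)Kf + (16/λ²)W²f = f`. -/
theorem statement2
    {H : Type*} [NormedAddCommGroup H] [InnerProductSpace ℂ H] [CompleteSpace H]
    (U K W : H →L[ℂ] H) (m : ℝ) (hm : 0 < m)
    (hU : IsSelfAdjoint U) (hK : IsSelfAdjoint K) (hW : IsSelfAdjoint W)
    (hU2 : U ∘L U = 1)
    (hKpos : ∀ f : H, 0 ≤ (inner ℂ (K f) f : ℂ).re)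
    (hanti : (U ∘L K) ∘L (U ∘L W) + (U ∘L W) ∘L (U ∘L K) = 0)
    (hUW2 : (U ∘L W) ∘L (U ∘L W) = -((1/4 : ℂ) • (1 : H →L[ℂ] H)))
    (l : ℝ) (hl : l ≠ 0) :
    (∃ u h : H, (u, h) ≠ (0, 0) ∧
        (2 * m) • K u + W h = (-(1 / l)) • u ∧ W u = (-(1 / l)) • h)
      ↔
    (∃ f : H, f ≠ 0 ∧ (8 * m / l) • K f + (16 / l ^ 2) • W (W f) = f) := by
  have hUU : ∀ x : H, U (U x) = x := by
    intro x
    have h1 := congrArg (fun T : H →L[ℂ] H => T x) hU2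
    simpa using h1
  have hUinj : ∀ x : H, U x = 0 → x = 0 := by
    intro x hx
    have h2 := hUU x
    rw [hx, map_zero] at h2
    exact h2.symm
  have hUWUW : ∀ x : H, U (W (U (W x))) = (-(4⁻¹ : ℝ)) • x := by
    intro x
    have h1 := congrArg (fun T : H →L[ℂ] H => T x) hUW2
    simp only [ContinuousLinearMap.coe_comp', Function.comp_apply,
      ContinuousLinearMap.neg_apply, ContinuousLinearMap.coe_smul', Pi.smul_apply,
      ContinuousLinearMap.one_apply] at h1
    rw [h1, ← neg_smul, show (-(1/4 : ℂ)) = ((-(4⁻¹ : ℝ) : ℝ) : ℂ) by norm_num,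
      Complex.coe_smul]
  have hWinj : ∀ x : H, W x = 0 → x = 0 := by
    intro x hx
    have h2 := hUWUW x
    rw [hx, map_zero, map_zero, map_zero] at h2
    have h3 : (-(4⁻¹ : ℝ)) • x = 0 := h2.symm
    rcases smul_eq_zero.mp h3 with h4 | h4
    · norm_num at h4
    · exact h4
  have hWUW : ∀ x : H, W (U (W x)) = (-(4⁻¹ : ℝ)) • U x := by
    intro x
    have h2 := congrArg U (hUWUW x)
    rw [hUU] at h2
    rw [h2, ContinuousLinearMap.map_smul_of_tower]
  have hKUW : ∀ x : H, K (U (W x)) = -(W (U (K x))) := by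
    intro x
    have h1 := congrArg (fun T : H →L[ℂ] H => T x) hanti
    simp only [ContinuousLinearMap.add_apply, ContinuousLinearMap.coe_comp',
      Function.comp_apply, ContinuousLinearMap.zero_apply] at h1
    have h2 := congrArg U h1
    rw [map_add, hUU, hUU, map_zero] at h2
    exact eq_neg_of_add_eq_zero_left h2
  have key : ∀ (a b : ℝ), a ≠ 0 → a * b = -(4⁻¹ : ℝ) → ∀ u h : H,
      (2 * m) • K u + W h = a • u → W u = a • h →
      ((2 * m) • K (U h) + W (U u) = b • U h ∧ W (U h) = b • U u) := by
    intro a b ha hab u h e1 e2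
    have c1 : a • W (U h) = (-(4⁻¹ : ℝ)) • U u := by
      have h3 := hWUW u
      rw [e2, ContinuousLinearMap.map_smul_of_tower,
        ContinuousLinearMap.map_smul_of_tower] at h3
      exact h3
    have F2 : W (U h) = b • U u := by
      refine smul_right_injective H ha ?_
      show a • W (U h) = a • (b • U u)
      rw [c1, smul_smul, hab]
    have c2 : a • K (U h) = -(W (U (K u))) := by
      have h3 := hKUW u
      rw [e2, ContinuousLinearMap.map_smul_of_tower,
        ContinuousLinearMap.map_smul_of_tower] at h3
      exact h3
    have c4 : (2 * m) • W (U (K u)) = a • W (U u) + (4⁻¹ : ℝ) • U h := by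
      have h5 : (2 * m) • K u = a • u - W h := eq_sub_of_add_eq e1
      have h6 := congrArg (fun y : H => W (U y)) h5
      simp only [map_sub, ContinuousLinearMap.map_smul_of_tower] at h6
      rw [hWUW h] at h6
      rw [h6]
      module
    have F1 : (2 * m) • K (U h) + W (U u) = b • U h := by
      refine smul_right_injective H ha ?_
      show a • ((2 * m) • K (U h) + W (U u)) = a • (b • U h)
      calc a • ((2 * m) • K (U h) + W (U u))
          = (2 * m) • (a • K (U h)) + a • W (U u) := by module
        _ = -((2 * m) • W (U (K u))) + a • W (U u) := by rw [c2]; module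
        _ = -(a • W (U u) + (4⁻¹ : ℝ) • U h) + a • W (U u) := by rw [c4]
        _ = a • (b • U h) := by rw [smul_smul, hab]; module
    exact ⟨F1, F2⟩
  constructor
  · rintro ⟨u, h, hne, e1, e2⟩
    have ha : (-(1 / l) : ℝ) ≠ 0 := neg_ne_zero.mpr (one_div_ne_zero hl)
    have hu : u ≠ 0 := by
      intro h0
      apply hne
      subst h0
      have h2 : (-(1 / l) : ℝ) • h = 0 := by rw [← e2, map_zero]
      rcases smul_eq_zero.mp h2 with h3 | h3
      · exact absurd h3 ha
      · rw [h3]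
    have hh : h ≠ 0 := by
      intro h0
      apply hu
      apply hWinj
      rw [e2, h0, smul_zero]
    obtain ⟨F1, F2⟩ := key (-(1 / l)) (l / 4) ha (by field_simp) u h e1 e2
    refine ⟨U h, fun h0 => hh (hUinj h h0), ?_⟩
    have F1' : W (U u) = (l / 4) • U h - (2 * m) • K (U h) := eq_sub_of_add_eq' F1
    rw [F2, ContinuousLinearMap.map_smul_of_tower, F1']
    match_scalars <;> field_simp <;> ring
  · rintro ⟨f, hf, hEq⟩
    have ha : (l / 4 : ℝ) ≠ 0 := div_ne_zero hl (by norm_num)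
    have e1₀ : (2 * m) • K f + W ((4 / l) • W f) = (l / 4) • f := by
      rw [ContinuousLinearMap.map_smul_of_tower]
      conv_rhs => rw [← hEq]
      match_scalars <;> field_simp <;> ring
    have e2₀ : W f = (l / 4) • ((4 / l) • W f) := by
      rw [smul_smul, show l / 4 * (4 / l) = 1 by field_simp, one_smul]
    obtain ⟨G1, G2⟩ := key (l / 4) (-(1 / l)) ha (by field_simp) f ((4 / l) • W f) e1₀ e2₀
    exact ⟨U ((4 / l) • W f), U f,
      fun hc => hf (hUinj f (congrArg Prod.snd hc)), G1, G2⟩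
end

section
/- Let λ₀ = inf{λ > 0 : (16/λ²)‖Wf‖² + (8m/λ)⟨Kf,f⟩ ≤ ‖f‖² for all f ∈ ℋ}. If λ > 0 and there exists a nonzero pair (u,h) ∈ ℋ ⊕ ℋ with C⁺(u,h) = −(1/λ)(u,h), then λ ≤ λ₀. If λ < 0 and there exists a nonzero pair (u,h) ∈ ℋ ⊕ ℋ with C⁻(u,h) = −(1/λ)(u,h), then λ ≥ −λ₀. -/
section Aux

variable {H : Type*} [NormedAddCommGroup H] [InnerProductSpace ℂ H] [CompleteSpace H]

lemma statement3_expand_sq (x y : H) (c : ℝ) :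
    ‖x + (c : ℂ) • y‖ ^ 2 = ‖x‖ ^ 2 + 2 * c * (inner ℂ x y : ℂ).re + c ^ 2 * ‖y‖ ^ 2 := by
  rw [norm_add_sq (𝕜 := ℂ), inner_smul_right]
  simp only [RCLike.re_to_complex, norm_smul, Complex.norm_real, mul_pow]
  have h1 : ((c : ℂ) * inner ℂ x y).re = c * (inner ℂ x y : ℂ).re := by
    simp [Complex.mul_re]
  rw [h1, Real.norm_eq_abs, sq_abs]
  ring

set_option maxHeartbeats 1000000 in
lemma statement3_core
    (U K W : H →L[ℂ] H) (m : ℝ) (hm : 0 < m)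
    (hU : IsSelfAdjoint U) (hK : IsSelfAdjoint K) (hW : IsSelfAdjoint W)
    (hU2 : U ∘L U = 1)
    (hKpos : ∀ f : H, 0 ≤ (inner ℂ (K f) f : ℂ).re)
    (hanti : (U ∘L K) ∘L (U ∘L W) + (U ∘L W) ∘L (U ∘L K) = 0)
    (hUW2 : (U ∘L W) ∘L (U ∘L W) = -((1/4 : ℂ) • (1 : H →L[ℂ] H)))
    (b lam : ℝ) (hb0 : 0 < b)
    (hbS : ∀ f : H,
      (16 / b ^ 2) * ‖W f‖ ^ 2 + (8 * m / b) * (inner ℂ (K f) f : ℂ).re ≤ ‖f‖ ^ 2)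
    (hlam : 0 < lam) (u h : H) (hne : (u, h) ≠ ((0 : H), (0 : H)))
    (e1 : (2 * m) • K u + W h = (-(1 / lam)) • u)
    (e2 : W u = (-(1 / lam)) • h) :
    lam ≤ b := by
  have hUsym : ∀ x y : H, (inner ℂ (U x) y : ℂ) = inner ℂ x (U y) := fun x y => hU.isSymmetric x y
  have hWsym : ∀ x y : H, (inner ℂ (W x) y : ℂ) = inner ℂ x (W y) := fun x y => hW.isSymmetric x y
  have hKsym : ∀ x y : H, (inner ℂ (K x) y : ℂ) = inner ℂ x (K y) := fun x y => hK.isSymmetric x y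
  have hUU : ∀ x : H, U (U x) = x := by
    intro x
    have := ContinuousLinearMap.ext_iff.1 hU2 x
    simpa using this
  have hA2 : ∀ x : H, U (W (U (W x))) = -((1/4 : ℂ) • x) := by
    intro x
    have := ContinuousLinearMap.ext_iff.1 hUW2 x
    simpa using this
  have hWUW : ∀ x : H, W (U (W x)) = -((1/4 : ℂ) • U x) := by
    intro x
    have h1 := congrArg U (hA2 x)
    rw [hUU] at h1
    rw [h1]; simp
  have hAnti : ∀ x : H, K (U (W x)) = - W (U (K x)) := by
    intro x
    have := ContinuousLinearMap.ext_iff.1 hanti x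
    simp only [ContinuousLinearMap.add_apply, ContinuousLinearMap.comp_apply,
      ContinuousLinearMap.zero_apply] at this
    have h2 := congrArg U this
    rw [map_add, hUU, hUU, map_zero] at h2
    exact eq_neg_of_add_eq_zero_left h2
  have hlamne : lam ≠ 0 := ne_of_gt hlam
  -- u ≠ 0
  have hu0 : u ≠ 0 := by
    intro hu
    apply hne
    have hz : (-(1 / lam)) • h = 0 := by rw [← e2, hu, map_zero]
    rcases smul_eq_zero.1 hz with hc | hh
    · exact absurd hc (by simp [hlamne])
    · rw [hu, hh]
  set P : ℝ := ‖u‖ ^ 2 with hP_def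
  set Q : ℝ := ‖W u‖ ^ 2 with hQ_def
  set α : ℝ := (inner ℂ (K u) u : ℂ).re with hα_def
  set s : ℝ := (inner ℂ u (U (W u)) : ℂ).re with hs_def
  have hPpos : 0 < P := pow_pos (norm_pos_iff.mpr hu0) 2
  have hα0 : 0 ≤ α := hKpos u
  -- h in terms of u
  have h_eq : h = (-lam) • W u := by
    rw [e2, smul_smul]
    have : -lam * -(1 / lam) = 1 := by field_simp
    rw [this, one_smul]
  have e3 : (2 * m) • K u - lam • W (W u) = (-(1 / lam)) • u := by
    have hWh : W h = (-lam) • W (W u) := by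
      rw [h_eq, RCLike.real_smul_eq_coe_smul (K := ℂ), map_smul,
        ← RCLike.real_smul_eq_coe_smul]
    rw [hWh] at e1
    simpa [sub_eq_add_neg, neg_smul] using e1
  -- the key identity: 2mα - lam Q = -(1/lam) P
  have hE : 2 * m * α - lam * Q = -(1 / lam) * P := by
    have h1 := congrArg (fun y => (inner ℂ u y : ℂ).re) e3
    have c1 : (inner ℂ u ((2 * m : ℝ) • K u) : ℂ) = ((2 * m : ℝ) : ℂ) * inner ℂ u (K u) := by
      rw [RCLike.real_smul_eq_coe_smul (K := ℂ), inner_smul_right]; rfl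
    have c2 : (inner ℂ u ((lam : ℝ) • W (W u)) : ℂ) = ((lam : ℝ) : ℂ) * inner ℂ (W u) (W u) := by
      rw [RCLike.real_smul_eq_coe_smul (K := ℂ), inner_smul_right, hWsym u (W u)]; rfl
    have c3 : (inner ℂ u ((-(1 / lam) : ℝ) • u) : ℂ) = ((-(1 / lam) : ℝ) : ℂ) * inner ℂ u u := by
      rw [RCLike.real_smul_eq_coe_smul (K := ℂ), inner_smul_right]; rfl
    rw [inner_sub_right, c1, c2, c3] at h1
    have hKuu : (inner ℂ u (K u) : ℂ) = inner ℂ (K u) u := (hKsym u u).symm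
    rw [hKuu] at h1
    have hnormu : ((inner ℂ u u : ℂ)).re = P := by
      simpa using inner_self_eq_norm_sq (𝕜 := ℂ) u
    have hnormW : ((inner ℂ (W u) (W u) : ℂ)).re = Q := by
      simpa using inner_self_eq_norm_sq (𝕜 := ℂ) (W u)
    simp only [Complex.sub_re, Complex.mul_re, Complex.ofReal_re, Complex.ofReal_im,
      zero_mul, sub_zero] at h1
    rw [hnormu, hnormW] at h1
    linarith [h1]
  -- abbreviation
  set A : H → H := fun x => U (W x) with hA_def
  -- anticommutation claims
  have claim1 : (inner ℂ (K u) (A u) : ℂ) = - inner ℂ (K (A u)) u := by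
    have step1 : (inner ℂ (K u) (A u) : ℂ) = inner ℂ (U (K u)) (W u) := by
      rw [hUsym (K u) (W u)]
    have step2 : (inner ℂ (U (K u)) (W u) : ℂ) = inner ℂ (W (U (K u))) u := by
      rw [hWsym (U (K u)) u]
    have step3 : W (U (K u)) = - K (U (W u)) := by rw [hAnti u, neg_neg]
    rw [step1, step2, step3, inner_neg_left]
  have claim2 : (inner ℂ (K (A u)) (A u) : ℂ) = (1/4 : ℂ) * inner ℂ (K u) u := by
    have step1 : (inner ℂ (K (A u)) (A u) : ℂ) = inner ℂ (U (K (A u))) (W u) := by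
      rw [hUsym (K (A u)) (W u)]
    have step2 : (inner ℂ (U (K (A u))) (W u) : ℂ) = inner ℂ (W (U (K (A u)))) u := by
      rw [hWsym (U (K (A u))) u]
    have step3 : W (U (K (A u))) = - K (U (W (A u))) := by rw [hAnti (A u), neg_neg]
    have step4 : U (W (A u)) = -((1/4 : ℂ) • u) := hA2 u
    rw [step1, step2, step3, step4, map_neg, map_smul, inner_neg_left, inner_neg_left,
      inner_smul_left, neg_neg]
    simp only [map_ofNat, one_div, map_inv₀]
  -- norm equalities
  have hAun : ‖A u‖ ^ 2 = Q := by
    have h1 : (inner ℂ (A u) (A u) : ℂ) = inner ℂ (W u) (W u) := by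
      show (inner ℂ (U (W u)) (U (W u)) : ℂ) = inner ℂ (W u) (W u)
      rw [hUsym (W u) (U (W u)), hUU]
    have h2 := inner_self_eq_norm_sq (𝕜 := ℂ) (A u)
    have h3 := inner_self_eq_norm_sq (𝕜 := ℂ) (W u)
    rw [h1] at h2
    rw [hQ_def, ← h3, ← h2]
  have hUun : ‖U u‖ ^ 2 = P := by
    have h1 : (inner ℂ (U u) (U u) : ℂ) = inner ℂ u u := by
      rw [hUsym u (U u), hUU]
    have h2 := inner_self_eq_norm_sq (𝕜 := ℂ) (U u)
    have h3 := inner_self_eq_norm_sq (𝕜 := ℂ) u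
    rw [h1] at h2
    rw [hP_def, ← h3, ← h2]
  have hs' : (inner ℂ (W u) (U u) : ℂ).re = s := by
    have h1 : (inner ℂ (U (W u)) u : ℂ) = inner ℂ (W u) (U u) := hUsym (W u) u
    rw [← h1]
    simpa [hs_def] using inner_re_symm (𝕜 := ℂ) (U (W u)) u
  -- expansions
  have N1 : ∀ t : ℝ, ‖u + (t : ℂ) • A u‖ ^ 2 = P + 2 * t * s + t ^ 2 * Q := by
    intro t
    rw [statement3_expand_sq u (A u) t, hAun, ← hP_def, ← hs_def]
  have N2 : ∀ t : ℝ, ‖W (u + (t : ℂ) • A u)‖ ^ 2 = Q - (t / 2) * s + (t ^ 2 / 16) * P := by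
    intro t
    have hW1 : W (u + (t : ℂ) • A u) = W u + ((-(t/4) : ℝ) : ℂ) • U u := by
      rw [map_add, map_smul]
      rw [show A u = U (W u) from rfl, hWUW u]
      rw [smul_neg, smul_smul]
      push_cast
      rw [← neg_smul]
      ring_nf
    rw [hW1, statement3_expand_sq (W u) (U u) (-(t/4)), hUun, hs', ← hQ_def]
    ring
  have N3 : ∀ t : ℝ,
      (inner ℂ (K (u + (t : ℂ) • A u)) (u + (t : ℂ) • A u) : ℂ).re = α * (1 + t ^ 2 / 4) := by
    intro t
    have hc : (inner ℂ (K (u + (t : ℂ) • A u)) (u + (t : ℂ) • A u) : ℂ)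
        = inner ℂ (K u) u + ((t : ℂ) * (t : ℂ)) * ((1/4 : ℂ) * inner ℂ (K u) u) := by
      rw [map_add, map_smul, inner_add_left, inner_add_right, inner_add_right,
        inner_smul_left, inner_smul_right, inner_smul_left, inner_smul_right,
        claim1, claim2, Complex.conj_ofReal]
      ring
    rw [hc]
    have : ((t : ℂ) * (t : ℂ)) * ((1/4 : ℂ) * inner ℂ (K u) u)
        = ((t ^ 2 / 4 : ℝ) : ℂ) * inner ℂ (K u) u := by
      push_cast; ring
    rw [this, Complex.add_re]
    have : (((t ^ 2 / 4 : ℝ) : ℂ) * inner ℂ (K u) u).re = (t ^ 2 / 4) * α := by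
      rw [hα_def]
      simp only [Complex.mul_re, Complex.ofReal_re, Complex.ofReal_im, zero_mul, sub_zero]
    rw [this, ← hα_def]
    ring
  -- the quadratic inequality
  have quad : ∀ t : ℝ, 0 ≤ (Q - P / b ^ 2 - 2 * m * α / b) * t ^ 2
      + (2 * s + 8 * s / b ^ 2) * t + (P - 16 * Q / b ^ 2 - 8 * m * α / b) := by
    intro t
    have h0 := hbS (u + (t : ℂ) • A u)
    rw [N1 t, N2 t, N3 t] at h0
    have hid : (Q - P / b ^ 2 - 2 * m * α / b) * t ^ 2
        + (2 * s + 8 * s / b ^ 2) * t + (P - 16 * Q / b ^ 2 - 8 * m * α / b)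
        = (P + 2 * t * s + t ^ 2 * Q)
          - ((16 / b ^ 2) * (Q - (t / 2) * s + (t ^ 2 / 16) * P)
            + (8 * m / b) * (α * (1 + t ^ 2 / 4))) := by
      ring
    rw [hid]
    linarith
  -- conclusion
  by_contra hcon
  push_neg at hcon
  have hQval : Q = P / lam ^ 2 + 2 * m * α / lam := by
    field_simp
    field_simp at hE
    linear_combination (-1) * hE
  have haneg : Q - P / b ^ 2 - 2 * m * α / b < 0 := by
    have h1 : 1 / lam ^ 2 < 1 / b ^ 2 :=
      one_div_lt_one_div_of_lt (by positivity) (by nlinarith)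
    have h2 : 1 / lam ≤ 1 / b := one_div_le_one_div_of_le hb0 (le_of_lt hcon)
    have h3 : 0 < P * (1 / b ^ 2 - 1 / lam ^ 2) := mul_pos hPpos (by linarith)
    have h4 : 0 ≤ (2 * m * α) * (1 / b - 1 / lam) :=
      mul_nonneg (by positivity) (by linarith)
    rw [hQval]
    have e5 : P / lam ^ 2 + 2 * m * α / lam - P / b ^ 2 - 2 * m * α / b
        = -(P * (1 / b ^ 2 - 1 / lam ^ 2)) - (2 * m * α) * (1 / b - 1 / lam) := by
      ring
    linarith [e5 ▸ (by linarith : -(P * (1 / b ^ 2 - 1 / lam ^ 2)) - (2 * m * α) * (1 / b - 1 / lam) < 0)]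
  set a : ℝ := Q - P / b ^ 2 - 2 * m * α / b with ha_def
  set bb : ℝ := 2 * s + 8 * s / b ^ 2 with hbb_def
  set cc : ℝ := P - 16 * Q / b ^ 2 - 8 * m * α / b with hcc_def
  set t0 : ℝ := max 1 ((|bb| + |cc| + 1) / (-a)) with ht0_def
  have ht1 : 1 ≤ t0 := le_max_left _ _
  have ht2 : (|bb| + |cc| + 1) / (-a) ≤ t0 := le_max_right _ _
  have hprod : |bb| + |cc| + 1 ≤ t0 * (-a) := (div_le_iff₀ (by linarith)).1 ht2
  have hq := quad t0
  have p1 : 0 ≤ ((-a) * t0 - (|bb| + |cc| + 1)) * t0 :=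
    mul_nonneg (by linarith) (by linarith)
  have p2 : 0 ≤ (|bb| - bb) * t0 :=
    mul_nonneg (by linarith [le_abs_self bb]) (by linarith)
  have p3 : 0 ≤ (|cc| + 1) * (t0 - 1) :=
    mul_nonneg (by positivity) (by linarith)
  nlinarith [hq, p1, p2, p3, le_abs_self cc, abs_nonneg bb, abs_nonneg cc, ht1]


lemma statement3_nonempty (K W : H →L[ℂ] H) (m : ℝ) (hm : 0 < m) :
    ∃ l : ℝ, 0 < l ∧ ∀ f : H,
      (16 / l ^ 2) * ‖W f‖ ^ 2 + (8 * m / l) * (inner ℂ (K f) f : ℂ).re ≤ ‖f‖ ^ 2 := by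
  have hW0 : (0:ℝ) ≤ 16 * ‖W‖ ^ 2 := by positivity
  have hK0 : (0:ℝ) ≤ 8 * m * ‖K‖ := by positivity
  refine ⟨1 + 16 * ‖W‖ ^ 2 + 8 * m * ‖K‖, by linarith, ?_⟩
  intro f
  set l : ℝ := 1 + 16 * ‖W‖ ^ 2 + 8 * m * ‖K‖ with hl_def
  have hl1 : 1 ≤ l := by simp only [hl_def]; linarith
  have hlpos : 0 < l := lt_of_lt_of_le one_pos hl1
  have hWf : ‖W f‖ ^ 2 ≤ ‖W‖ ^ 2 * ‖f‖ ^ 2 := by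
    nlinarith [W.le_opNorm f, norm_nonneg (W f), norm_nonneg f, norm_nonneg W]
  have hKf : (inner ℂ (K f) f : ℂ).re ≤ ‖K‖ * ‖f‖ ^ 2 := by
    have h1 : (inner ℂ (K f) f : ℂ).re ≤ ‖(inner ℂ (K f) f : ℂ)‖ := by
      exact Complex.re_le_norm _
    have h2 : ‖(inner ℂ (K f) f : ℂ)‖ ≤ ‖K f‖ * ‖f‖ := norm_inner_le_norm _ _
    have h3 : ‖K f‖ * ‖f‖ ≤ (‖K‖ * ‖f‖) * ‖f‖ :=
      mul_le_mul_of_nonneg_right (K.le_opNorm f) (norm_nonneg f)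
    nlinarith
  have e16 : 16 / l ^ 2 ≤ 16 / l := by
    apply div_le_div_of_nonneg_left (by norm_num) hlpos
    nlinarith
  have t1 : (16 / l ^ 2) * ‖W f‖ ^ 2 ≤ (16 / l) * (‖W‖ ^ 2 * ‖f‖ ^ 2) := by
    apply mul_le_mul e16 hWf (by positivity) (by positivity)
  have t2 : (8 * m / l) * (inner ℂ (K f) f : ℂ).re ≤ (8 * m / l) * (‖K‖ * ‖f‖ ^ 2) :=
    mul_le_mul_of_nonneg_left hKf (by positivity)
  have t3 : (16 / l) * (‖W‖ ^ 2 * ‖f‖ ^ 2) + (8 * m / l) * (‖K‖ * ‖f‖ ^ 2)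
      = ((16 * ‖W‖ ^ 2 + 8 * m * ‖K‖) / l) * ‖f‖ ^ 2 := by ring
  have t4 : ((16 * ‖W‖ ^ 2 + 8 * m * ‖K‖) / l) * ‖f‖ ^ 2 ≤ 1 * ‖f‖ ^ 2 := by
    apply mul_le_mul_of_nonneg_right _ (by positivity)
    rw [div_le_one hlpos]
    simp only [hl_def]; linarith
  linarith [t1, t2, t3 ▸ (le_of_eq t3), t4, one_mul (‖f‖ ^ 2) ▸ t4]

end Aux

/-- In the shell-interaction setting, with
`C⁺(u,h) = (2mKu + Wh, Wu)` and `C⁻(u,h) = (Wh, Wu - 2mKh)` on `ℋ ⊕ ℋ`, and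
`λ₀ = inf {λ > 0 : (16/λ²)‖Wf‖² + (8m/λ)⟨Kf,f⟩ ≤ ‖f‖² for all f}`:
if `λ > 0` and `ker(1/λ + C⁺) ≠ 0`, then `λ ≤ λ₀`; and if `λ < 0` and
`ker(1/λ + C⁻) ≠ 0`, then `λ ≥ -λ₀`. -/
theorem statement3
    {H : Type*} [NormedAddCommGroup H] [InnerProductSpace ℂ H] [CompleteSpace H]
    (U K W : H →L[ℂ] H) (m : ℝ) (hm : 0 < m)
    (hU : IsSelfAdjoint U) (hK : IsSelfAdjoint K) (hW : IsSelfAdjoint W)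
    (hU2 : U ∘L U = 1)
    (hKpos : ∀ f : H, 0 ≤ (inner ℂ (K f) f : ℂ).re)
    (hanti : (U ∘L K) ∘L (U ∘L W) + (U ∘L W) ∘L (U ∘L K) = 0)
    (hUW2 : (U ∘L W) ∘L (U ∘L W) = -((1/4 : ℂ) • (1 : H →L[ℂ] H)))
    (S : Set ℝ)
    (hS : S = {l : ℝ | 0 < l ∧ ∀ f : H,
      (16 / l ^ 2) * ‖W f‖ ^ 2 + (8 * m / l) * (inner ℂ (K f) f : ℂ).re ≤ ‖f‖ ^ 2}) :
    (∀ l : ℝ, 0 < l →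
      (∃ u h : H, (u, h) ≠ (0, 0) ∧
          (2 * m) • K u + W h = (-(1 / l)) • u ∧ W u = (-(1 / l)) • h) →
      l ≤ sInf S) ∧
    (∀ l : ℝ, l < 0 →
      (∃ u h : H, (u, h) ≠ (0, 0) ∧
          W h = (-(1 / l)) • u ∧ W u - (2 * m) • K h = (-(1 / l)) • h) →
      -(sInf S) ≤ l) := by
  obtain ⟨l₀, hl₀pos, hl₀⟩ := statement3_nonempty K W m hm
  have hSne : S.Nonempty := ⟨l₀, by rw [hS]; exact ⟨hl₀pos, hl₀⟩⟩
  constructor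
  · rintro l hl ⟨u, h, hne, e1, e2⟩
    apply le_csInf hSne
    intro bv hbv
    rw [hS] at hbv
    exact statement3_core U K W m hm hU hK hW hU2 hKpos hanti hUW2 bv l hbv.1 hbv.2
      hl u h hne e1 e2
  · rintro l hl ⟨u, h, hne, f1, f2⟩
    have hlne : l ≠ 0 := ne_of_lt hl
    have hl' : 0 < -l := by linarith
    have key : (-(1 / (-l)) : ℝ) = 1 / l := by field_simp
    have g1 : (2 * m) • K h + W (-u) = (-(1 / (-l))) • h := by
      rw [key, map_neg]
      have h1 : (2 * m) • K h + -(W u) = -(W u - (2 * m) • K h) := by abel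
      rw [h1, f2, ← neg_smul, neg_neg]
    have g2 : W h = (-(1 / (-l))) • (-u) := by
      rw [key, f1, smul_neg, ← neg_smul]
    have hne' : ((h, -u) : H × H) ≠ (0, 0) := by
      simp only [ne_eq, Prod.mk.injEq, not_and, neg_eq_zero] at hne ⊢
      intro hh hu
      rcases eq_or_ne u 0 with hu0 | hu0
      · exact (hne hu0) hh
      · exact hu0 hu
    have h2 : -l ≤ sInf S := by
      apply le_csInf hSne
      intro bv hbv
      rw [hS] at hbv
      exact statement3_core U K W m hm hU hK hW hU2 hKpos hanti hUW2 bv (-l) hbv.1 hbv.2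
        hl' h (-u) hne' g1 g2
    linarith
end

section
/- Assume in addition that K is compact and that W² − (1/4)·Id is compact, and let λ₀ = inf{λ > 0 : (16/λ₀²)‖Wf‖² + (8m/λ)⟨Kf,f⟩ ≤ ‖f‖² for all f ∈ ℋ}. If λ₀ > 2√2, then: (a) there exists f ≠ 0 with (16/λ₀²)‖Wf‖² + (8m/λ₀)⟨Kf,f⟩ = ‖f‖²; (b) a nonzero f attains this equality if and only if 16W²f + 8mλ₀Kf = λ₀²f; (c) consequently ker(1/λ₀ + C⁺) ≠ 0 and ker(−1/λ₀ + C⁻) ≠ 0. -/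
section Helpers
variable {H : Type*} [NormedAddCommGroup H] [InnerProductSpace ℂ H] [CompleteSpace H]

local notation "⟪" x ", " y "⟫" => @inner ℂ _ _ x y

lemma st4_flip {T : H →L[ℂ] H} (hT : IsSelfAdjoint T) (f g : H) :
    ⟪T g, f⟫ = starRingEnd ℂ ⟪T f, g⟫ := by
  conv_lhs => rw [← hT.adjoint_eq]
  rw [ContinuousLinearMap.adjoint_inner_left, ← inner_conj_symm]

lemma st4_polar {T : H →L[ℂ] H} (hT : IsSelfAdjoint T) (f g : H) :
    4 * (⟪T f, g⟫).re = (⟪T (f + g), f + g⟫).re - (⟪T (f - g), f - g⟫).re := by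
  simp only [map_add, map_sub, inner_add_left, inner_add_right, inner_sub_left,
    inner_sub_right, st4_flip hT f g, Complex.add_re, Complex.sub_re, Complex.conj_re]
  ring

/-- If `0 ≤ T ≤ 1` (as forms) and `T` self-adjoint, then `‖T f‖ ≤ ‖f‖`. -/
lemma st4_norm_le {T : H →L[ℂ] H} (hT : IsSelfAdjoint T)
    (h0 : ∀ f : H, 0 ≤ (⟪T f, f⟫).re) (h1 : ∀ f : H, (⟪T f, f⟫).re ≤ ‖f‖ ^ 2)
    (f : H) : ‖T f‖ ≤ ‖f‖ := by
  rcases eq_or_ne (T f) 0 with h | h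
  · simp [h]
  have hTf : 0 < ‖T f‖ := norm_pos_iff.2 h
  have hf : 0 < ‖f‖ := by
    rcases eq_or_ne f 0 with rfl | hf
    · simp at h
    · exact norm_pos_iff.2 hf
  set g : H := ((‖f‖ / ‖T f‖ : ℝ) : ℂ) • T f with hg
  have hgnorm : ‖g‖ = ‖f‖ := by
    rw [hg, norm_smul]
    simp [abs_of_nonneg (div_nonneg hf.le hTf.le), div_mul_cancel₀, hTf.ne']
  have hre : (⟪T f, g⟫).re = ‖f‖ * ‖T f‖ := by
    rw [hg, inner_smul_right, Complex.re_ofReal_mul, ← RCLike.re_to_complex,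
      inner_self_eq_norm_sq]
    field_simp
  have key : 4 * (⟪T f, g⟫).re ≤ (‖f‖ + ‖g‖) ^ 2 := by
    have := st4_polar hT f g
    have h2 : (⟪T (f + g), f + g⟫).re ≤ ‖f + g‖ ^ 2 := h1 _
    have h3 : 0 ≤ (⟪T (f - g), f - g⟫).re := h0 _
    have h4 : ‖f + g‖ ≤ ‖f‖ + ‖g‖ := norm_add_le _ _
    nlinarith [norm_nonneg (f + g), norm_nonneg f, norm_nonneg g]
  rw [hre, hgnorm] at key
  nlinarith

/-- positive operator with vanishing form has vanishing value -/
lemma st4_pos_ker {P : H →L[ℂ] H} (hP : IsSelfAdjoint P)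
    (h0 : ∀ g : H, 0 ≤ (⟪P g, g⟫).re) {f : H} (hf : (⟪P f, f⟫).re = 0) :
    P f = 0 := by
  have key : ∀ g : H, (⟪P f, g⟫).re = 0 := by
    intro g
    have expand : ∀ t : ℝ, 0 ≤ t ^ 2 * (⟪P g, g⟫).re + 2 * t * (⟪P f, g⟫).re := by
      intro t
      have h := h0 (f + (t : ℂ) • g)
      have : (⟪P (f + (t : ℂ) • g), f + (t : ℂ) • g⟫).re
          = (⟪P f, f⟫).re + t ^ 2 * (⟪P g, g⟫).re + 2 * t * (⟪P f, g⟫).re := by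
        simp only [map_add, map_smul, inner_add_left, inner_add_right,
          inner_smul_left, inner_smul_right, st4_flip hP f g, Complex.add_re,
          Complex.mul_re, Complex.conj_re, Complex.conj_im, Complex.ofReal_re,
          Complex.ofReal_im]
        ring
      rw [this, hf] at h
      linarith
    set a := (⟪P g, g⟫).re
    set b := (⟪P f, g⟫).re
    have ha : 0 ≤ a := h0 g
    have hx := expand (-(b / (a + 1)))
    have h1 : (-(b/(a+1)))^2 * a + 2 * (-(b/(a+1))) * b = -(b^2*(a+2))/(a+1)^2 := by
      field_simp
      ring
    rw [h1] at hx
    have hd : (0:ℝ) < (a+1)^2 := by positivity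
    have h2 : 0 ≤ -(b^2*(a+2)) := by
      rcases div_nonneg_iff.mp hx with ⟨h,_⟩ | ⟨_,h⟩
      · exact h
      · nlinarith
    have h3 : b ^ 2 = 0 := le_antisymm (by nlinarith) (sq_nonneg b)
    exact pow_eq_zero_iff (two_ne_zero) |>.mp h3
  have keyC : ∀ g : H, ⟪P f, g⟫ = 0 := by
    intro g
    have h1 := key g
    have h2 := key ((Complex.I : ℂ) • g)
    rw [inner_smul_right] at h2
    simp only [Complex.mul_re, Complex.I_re, Complex.I_im] at h2
    apply Complex.ext
    · exact h1
    · simpa using h2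
  have := keyC (P f)
  rwa [inner_self_eq_zero] at this

end Helpers

set_option maxHeartbeats 1000000 in
/-- In the shell-interaction setting, assume additionally that `K` and
`W² - (1/4)·Id` are compact operators, and let
`λ₀ = inf {λ > 0 : (16/λ²)‖Wf‖² + (8m/λ)⟨Kf,f⟩ ≤ ‖f‖² for all f}`.  If `λ₀ > 2√2`, then:
(a) some `f ≠ 0` attains equality `(16/λ₀²)‖Wf‖² + (8m/λ₀)⟨Kf,f⟩ = ‖f‖²`;
(b) a nonzero `f` attains this equality iff `16W²f + 8mλ₀Kf = λ₀²f`;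
(c) consequently `ker(1/λ₀ + C⁺) ≠ 0` and `ker(-1/λ₀ + C⁻) ≠ 0`, where
`C⁺(u,h) = (2mKu + Wh, Wu)` and `C⁻(u,h) = (Wh, Wu - 2mKh)`. -/
theorem statement4
    {H : Type*} [NormedAddCommGroup H] [InnerProductSpace ℂ H] [CompleteSpace H]
    (U K W : H →L[ℂ] H) (m : ℝ) (hm : 0 < m)
    (hU : IsSelfAdjoint U) (hK : IsSelfAdjoint K) (hW : IsSelfAdjoint W)
    (hU2 : U ∘L U = 1)
    (hKpos : ∀ f : H, 0 ≤ (inner ℂ (K f) f : ℂ).re)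
    (hanti : (U ∘L K) ∘L (U ∘L W) + (U ∘L W) ∘L (U ∘L K) = 0)
    (hUW2 : (U ∘L W) ∘L (U ∘L W) = -((1/4 : ℂ) • (1 : H →L[ℂ] H)))
    (hKcpt : IsCompactOperator (⇑K))
    (hWcpt : IsCompactOperator (⇑(W ∘L W - (1/4 : ℂ) • (1 : H →L[ℂ] H))))
    (S : Set ℝ)
    (hS : S = {l : ℝ | 0 < l ∧ ∀ f : H,
      (16 / l ^ 2) * ‖W f‖ ^ 2 + (8 * m / l) * (inner ℂ (K f) f : ℂ).re ≤ ‖f‖ ^ 2})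
    (hbig : 2 * Real.sqrt 2 < sInf S) :
    (∃ f : H, f ≠ 0 ∧
      (16 / (sInf S) ^ 2) * ‖W f‖ ^ 2 + (8 * m / sInf S) * (inner ℂ (K f) f : ℂ).re
        = ‖f‖ ^ 2) ∧
    (∀ f : H, f ≠ 0 →
      ((16 / (sInf S) ^ 2) * ‖W f‖ ^ 2 + (8 * m / sInf S) * (inner ℂ (K f) f : ℂ).re
          = ‖f‖ ^ 2
        ↔ (16 : ℝ) • W (W f) + (8 * m * sInf S) • K f = ((sInf S) ^ 2) • f)) ∧
    (∃ u h : H, (u, h) ≠ (0, 0) ∧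
        (2 * m) • K u + W h = (-(1 / sInf S)) • u ∧ W u = (-(1 / sInf S)) • h) ∧
    (∃ u h : H, (u, h) ≠ (0, 0) ∧
        W h = (1 / sInf S) • u ∧ W u - (2 * m) • K h = (1 / sInf S) • h) := by
  set lam := sInf S with hlamdef
  have hs2 : (1 : ℝ) < Real.sqrt 2 := by
    have := Real.lt_sqrt (x := 1) (y := 2) (by norm_num)
    rw [this]; norm_num
  have hlam_pos : 0 < lam := lt_trans (by linarith) hbig
  have hlam_ne : lam ≠ 0 := hlam_pos.ne'
  have hlam8 : 8 < lam ^ 2 := by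
    have h2 : Real.sqrt 2 ^ 2 = 2 := Real.sq_sqrt (by norm_num)
    nlinarith [Real.sqrt_nonneg 2]
  have hSne : S.Nonempty := by
    by_contra hemp
    rw [Set.not_nonempty_iff_eq_empty] at hemp
    have : lam = 0 := by rw [hlamdef, hemp, Real.sInf_empty]
    linarith
  have hSbd : BddBelow S := by
    refine ⟨0, fun l hl => ?_⟩
    rw [hS] at hl
    exact hl.1.le
  -- Step A : the form at lam is still bounded by the norm
  have hQle : ∀ f : H, 16 / lam ^ 2 * ‖W f‖ ^ 2
      + 8 * m / lam * (inner ℂ (K f) f : ℂ).re ≤ ‖f‖ ^ 2 := by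
    intro f
    set a := ‖W f‖ ^ 2 with ha
    set b := (inner ℂ (K f) f : ℂ).re with hb
    have ha0 : 0 ≤ a := by positivity
    have hb0 : 0 ≤ b := hKpos f
    have hmono : ∀ l ∈ Set.Ioi lam, 16 / l ^ 2 * a + 8 * m / l * b ≤ ‖f‖ ^ 2 := by
      intro l hl
      rw [Set.mem_Ioi] at hl
      obtain ⟨l', hl'S, hl'lt⟩ := (csInf_lt_iff hSbd hSne).mp (show sInf S < l from hl)
      have hl'mem := hl'S
      rw [hS] at hl'mem
      obtain ⟨hl'pos, hl'ineq⟩ := hl'mem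
      refine le_trans ?_ (hl'ineq f)
      rw [← ha, ← hb]
      have hll : l' ≤ l := hl'lt.le
      have h1 : 16 / l ^ 2 ≤ 16 / l' ^ 2 := by
        apply div_le_div_of_nonneg_left (by norm_num) (by positivity)
        nlinarith
      have h2 : 8 * m / l ≤ 8 * m / l' := by
        apply div_le_div_of_nonneg_left (by positivity) (by positivity) hll
      have := mul_le_mul_of_nonneg_right h1 ha0
      have := mul_le_mul_of_nonneg_right h2 hb0
      linarith
    have hcont : ContinuousWithinAt (fun l : ℝ => 16 / l ^ 2 * a + 8 * m / l * b)
        (Set.Ioi lam) lam := by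
      apply ContinuousAt.continuousWithinAt
      have hc1 : ContinuousAt (fun l : ℝ => 16 / l ^ 2) lam :=
        ContinuousAt.div continuousAt_const ((continuous_pow 2).continuousAt)
          (by positivity)
      have hc2 : ContinuousAt (fun l : ℝ => 8 * m / l) lam :=
        ContinuousAt.div continuousAt_const continuousAt_id hlam_ne
      exact (hc1.mul continuousAt_const).add (hc2.mul continuousAt_const)
    exact le_of_tendsto hcont (eventually_nhdsWithin_of_forall hmono)
  -- Step B : sharpness
  have hsup : ∀ s : ℝ, s < 1 → ∃ f : H, ‖f‖ = 1 ∧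
      s < 16 / lam ^ 2 * ‖W f‖ ^ 2 + 8 * m / lam * (inner ℂ (K f) f : ℂ).re := by
    intro s hs
    by_contra hcon
    push_neg at hcon
    set s₀ := max s (1/2) with hs₀
    have hs₀1 : s₀ < 1 := max_lt hs (by norm_num)
    have hs₀pos : (0:ℝ) < s₀ := lt_of_lt_of_le (by norm_num) (le_max_right _ _)
    have hQs : ∀ f : H, 16 / lam ^ 2 * ‖W f‖ ^ 2 + 8 * m / lam * (inner ℂ (K f) f : ℂ).re
        ≤ s₀ * ‖f‖ ^ 2 := by
      intro f
      rcases eq_or_ne f 0 with rfl | hf0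
      · simp
      · have hnf : 0 < ‖f‖ := norm_pos_iff.2 hf0
        set c : ℂ := ((‖f‖⁻¹ : ℝ) : ℂ) with hc
        have hg1 : ‖c • f‖ = 1 := by
          rw [norm_smul, hc, Complex.norm_real, Real.norm_eq_abs,
            abs_of_nonneg (inv_nonneg.2 hnf.le), inv_mul_cancel₀ hnf.ne']
        have := hcon (c • f) hg1
        have hWg : ‖W (c • f)‖ ^ 2 = ‖f‖⁻¹ ^ 2 * ‖W f‖ ^ 2 := by
          rw [map_smul, norm_smul, hc, Complex.norm_real, Real.norm_eq_abs,
            abs_of_nonneg (inv_nonneg.2 hnf.le)]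
          ring
        have hKg : (inner ℂ (K (c • f)) (c • f) : ℂ).re
            = ‖f‖⁻¹ ^ 2 * (inner ℂ (K f) f : ℂ).re := by
          rw [map_smul, inner_smul_left, inner_smul_right, hc, Complex.conj_ofReal,
            ← mul_assoc, ← Complex.ofReal_mul, Complex.re_ofReal_mul]
          ring
        rw [hWg, hKg] at this
        have hle : 16 / lam ^ 2 * ‖W f‖ ^ 2 + 8 * m / lam * (inner ℂ (K f) f : ℂ).re
            ≤ s * ‖f‖ ^ 2 := by
          have h2 := mul_le_mul_of_nonneg_left this (le_of_lt (by positivity : (0:ℝ) < ‖f‖ ^ 2))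
          have hinv : ‖f‖ ^ 2 * (‖f‖⁻¹ ^ 2) = 1 := by
            field_simp
          calc 16 / lam ^ 2 * ‖W f‖ ^ 2 + 8 * m / lam * (inner ℂ (K f) f : ℂ).re
              = ‖f‖ ^ 2 * (16 / lam ^ 2 * (‖f‖⁻¹ ^ 2 * ‖W f‖ ^ 2)
                + 8 * m / lam * (‖f‖⁻¹ ^ 2 * (inner ℂ (K f) f : ℂ).re)) := by
                field_simp
            _ ≤ ‖f‖ ^ 2 * s := h2
            _ = s * ‖f‖ ^ 2 := by ring
        have : s ≤ s₀ := le_max_left _ _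
        nlinarith [sq_nonneg ‖f‖]
    -- construct a smaller element of S
    set l' := lam * Real.sqrt s₀ with hl'
    have hsq_pos : 0 < Real.sqrt s₀ := Real.sqrt_pos.2 hs₀pos
    have hsq_lt1 : Real.sqrt s₀ < 1 := by
      rw [show (1:ℝ) = Real.sqrt 1 from (Real.sqrt_one).symm]
      exact Real.sqrt_lt_sqrt hs₀pos.le hs₀1
    have hl'pos : 0 < l' := mul_pos hlam_pos hsq_pos
    have hl'lt : l' < lam := by
      calc l' = lam * Real.sqrt s₀ := rfl
        _ < lam * 1 := by exact mul_lt_mul_of_pos_left hsq_lt1 hlam_pos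
        _ = lam := mul_one lam
    have hl'S : l' ∈ S := by
      rw [hS]
      refine ⟨hl'pos, fun f => ?_⟩
      have hsq : Real.sqrt s₀ ^ 2 = s₀ := Real.sq_sqrt hs₀pos.le
      have hl'sq : l' ^ 2 = lam ^ 2 * s₀ := by
        rw [hl', mul_pow, hsq]
      have e1 : 16 / l' ^ 2 = (16 / lam ^ 2) / s₀ := by
        rw [hl'sq]; field_simp
      have e2 : 8 * m / l' ≤ (8 * m / lam) / s₀ := by
        rw [hl', show (8*m/lam)/s₀ = 8*m/(lam*s₀) from by rw [div_div]]
        apply div_le_div_of_nonneg_left (by positivity) (by positivity)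
        have hssq : s₀ ≤ Real.sqrt s₀ := by
          nlinarith [hsq, Real.sqrt_nonneg s₀]
        nlinarith
      have hKf := hKpos f
      have hQ := hQs f
      have hW0 : (0:ℝ) ≤ ‖W f‖ ^ 2 := by positivity
      calc 16 / l' ^ 2 * ‖W f‖ ^ 2 + 8 * m / l' * (inner ℂ (K f) f : ℂ).re
          ≤ (16 / lam ^ 2) / s₀ * ‖W f‖ ^ 2 + (8 * m / lam) / s₀ * (inner ℂ (K f) f : ℂ).re := by
            rw [e1]
            have := mul_le_mul_of_nonneg_right e2 hKf
            linarith
        _ = (16 / lam ^ 2 * ‖W f‖ ^ 2 + 8 * m / lam * (inner ℂ (K f) f : ℂ).re) / s₀ := by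
            ring
        _ ≤ (s₀ * ‖f‖ ^ 2) / s₀ := by
            gcongr
        _ = ‖f‖ ^ 2 := by field_simp
    have : lam ≤ l' := csInf_le hSbd hl'S
    linarith
  -- Step C : the operator T
  set T : H →L[ℂ] H := ((16 / lam ^ 2 : ℝ) : ℂ) • (W ∘L W) + ((8 * m / lam : ℝ) : ℂ) • K
    with hTdef
  have hWWsym : ∀ f : H, (inner ℂ (W (W f)) f : ℂ) = inner ℂ (W f) (W f) := by
    intro f
    rw [st4_flip hW f (W f), inner_self_conj]
  have hT_inner : ∀ f : H, (inner ℂ (T f) f : ℂ).re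
      = 16 / lam ^ 2 * ‖W f‖ ^ 2 + 8 * m / lam * (inner ℂ (K f) f : ℂ).re := by
    intro f
    rw [hTdef]
    simp only [ContinuousLinearMap.add_apply, ContinuousLinearMap.smul_apply,
      ContinuousLinearMap.comp_apply, inner_add_left, inner_smul_left,
      Complex.conj_ofReal, Complex.add_re, Complex.re_ofReal_mul, hWWsym f]
    rw [← RCLike.re_to_complex, inner_self_eq_norm_sq]
  have hTsa : IsSelfAdjoint T := by
    have hWW : IsSelfAdjoint (W ∘L W) := by
      change IsSelfAdjoint (W * W)
      rw [IsSelfAdjoint, star_mul, hW.star_eq]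
    have hr1 : IsSelfAdjoint ((16 / lam ^ 2 : ℝ) : ℂ) := Complex.conj_ofReal _
    have hr2 : IsSelfAdjoint ((8 * m / lam : ℝ) : ℂ) := Complex.conj_ofReal _
    exact (hr1.smul hWW).add (hr2.smul hK)
  have hT0 : ∀ f : H, 0 ≤ (inner ℂ (T f) f : ℂ).re := by
    intro f
    rw [hT_inner]
    have h1 : 0 ≤ 16 / lam ^ 2 * ‖W f‖ ^ 2 := by positivity
    have h2 : 0 ≤ 8 * m / lam * (inner ℂ (K f) f : ℂ).re :=
      mul_nonneg (by positivity) (hKpos f)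
    linarith
  have hT1 : ∀ f : H, (inner ℂ (T f) f : ℂ).re ≤ ‖f‖ ^ 2 := by
    intro f; rw [hT_inner]; exact hQle f
  have hTnorm : ∀ f : H, ‖T f‖ ≤ ‖f‖ := st4_norm_le hTsa hT0 hT1
  -- Step D : attainment
  obtain ⟨f, hf0, hfeq⟩ : ∃ f : H, f ≠ 0 ∧
      16 / lam ^ 2 * ‖W f‖ ^ 2 + 8 * m / lam * (inner ℂ (K f) f : ℂ).re = ‖f‖ ^ 2 := by
    have hseq : ∀ n : ℕ, ∃ f : H, ‖f‖ = 1 ∧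
        1 - 1/(n+1) < 16 / lam ^ 2 * ‖W f‖ ^ 2 + 8 * m / lam * (inner ℂ (K f) f : ℂ).re := by
      intro n
      apply hsup
      have : (0:ℝ) < 1/(n+1) := by positivity
      linarith
    choose g hg1 hg2 using hseq
    set x : ℕ → ℝ := fun n => (inner ℂ (T (g n)) (g n) : ℂ).re with hx
    have hxle : ∀ n, x n ≤ 1 := by
      intro n
      have := hT1 (g n)
      rwa [hg1 n, one_pow] at this
    have hxgt : ∀ n, 1 - 1/(n+1) < x n := by
      intro n
      have := hg2 n
      rw [hx]
      simp only []
      rw [hT_inner]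
      exact this
    have hxtend : Filter.Tendsto x Filter.atTop (nhds 1) := by
      have hlow : Filter.Tendsto (fun n : ℕ => 1 - 1/((n:ℝ)+1)) Filter.atTop (nhds 1) := by
        have h1 := tendsto_one_div_add_atTop_nhds_zero_nat (𝕜 := ℝ)
        have h2 := h1.const_sub (1:ℝ)
        simpa using h2
      exact tendsto_of_tendsto_of_tendsto_of_le_of_le hlow tendsto_const_nhds
        (fun n => (hxgt n).le) hxle
    have hdiffsq : ∀ n, ‖T (g n) - g n‖ ^ 2 ≤ 2 - 2 * x n := by
      intro n
      have hTn : ‖T (g n)‖ ≤ 1 := by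
        have := hTnorm (g n); rwa [hg1 n] at this
      have hns := @norm_sub_sq ℂ _ _ _ _ (T (g n)) (g n)
      rw [hg1 n] at hns
      simp only [RCLike.re_to_complex] at hns
      rw [hns]
      have : ‖T (g n)‖ ^ 2 ≤ 1 := by nlinarith [norm_nonneg (T (g n))]
      simp only [hx]
      nlinarith
    have hsqtend : Filter.Tendsto (fun n => ‖T (g n) - g n‖ ^ 2) Filter.atTop (nhds 0) := by
      have hupper : Filter.Tendsto (fun n => 2 - 2 * x n) Filter.atTop (nhds 0) := by
        have := (hxtend.const_mul (2:ℝ)).const_sub 2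
        simpa using this
      exact tendsto_of_tendsto_of_tendsto_of_le_of_le tendsto_const_nhds hupper
        (fun n => by positivity) hdiffsq
    have hntend : Filter.Tendsto (fun n => ‖T (g n) - g n‖) Filter.atTop (nhds 0) := by
      have h1 : Filter.Tendsto (fun n => Real.sqrt (‖T (g n) - g n‖ ^ 2))
          Filter.atTop (nhds (Real.sqrt 0)) :=
        (Real.continuous_sqrt.tendsto 0).comp hsqtend
      simp only [Real.sqrt_zero] at h1
      convert h1 using 2 with n
      rw [Real.sqrt_sq (norm_nonneg _)]
    have hdiff0 : Filter.Tendsto (fun n => T (g n) - g n) Filter.atTop (nhds 0) :=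
      tendsto_zero_iff_norm_tendsto_zero.mpr hntend
    -- the compact part
    set Cop : H →L[ℂ] H := T - ((4/lam^2 : ℝ) : ℂ) • (1 : H →L[ℂ] H) with hCdef
    have hCeq : Cop = ((16/lam^2:ℝ):ℂ) • (W ∘L W - (1/4:ℂ) • (1:H →L[ℂ] H))
        + ((8*m/lam:ℝ):ℂ) • K := by
      rw [hCdef, hTdef, smul_sub]
      have he : ((16/lam^2:ℝ):ℂ) • ((1/4:ℂ) • (1:H →L[ℂ] H)) = ((4/lam^2:ℝ):ℂ) • 1 := by
        rw [smul_smul]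
        congr 1
        push_cast
        ring
      rw [he]
      abel
    have hCcpt : IsCompactOperator (⇑Cop) := by
      rw [hCeq]
      exact IsCompactOperator.add (hWcpt.smul _) (hKcpt.smul _)
    have hbddg : Bornology.IsBounded (Set.range g) := by
      have hsub : Set.range g ⊆ Metric.closedBall 0 1 := by
        rintro _ ⟨n, rfl⟩
        rw [Metric.mem_closedBall, dist_zero_right, hg1 n]
      exact (Metric.isBounded_closedBall).subset hsub
    have hCcpt' : IsCompactOperator ⇑((Cop : H →ₗ[ℂ] H)) := by
      rw [ContinuousLinearMap.coe_coe]
      exact hCcpt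
    obtain ⟨Kc, hKcomp, hKsub⟩ := hCcpt'.image_subset_compact_of_bounded hbddg
    have hmem : ∀ n, (Cop (g n)) ∈ Kc := fun n => hKsub ⟨g n, ⟨n, rfl⟩, rfl⟩
    obtain ⟨y, hyK, φ, hφmono, hφtend⟩ := hKcomp.tendsto_subseq hmem
    set μ : ℝ := 1 - 4/lam^2 with hμ
    have hμpos : 0 < μ := by
      rw [hμ]
      have h1 : 4/lam^2 < 1/2 := by
        rw [div_lt_iff₀ (by positivity)]
        nlinarith
      linarith
    have hrel : ∀ n, ((μ:ℝ):ℂ) • g n = Cop (g n) - (T (g n) - g n) := by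
      intro n
      rw [hCdef]
      simp only [ContinuousLinearMap.sub_apply, ContinuousLinearMap.smul_apply,
        ContinuousLinearMap.one_apply, hμ]
      push_cast
      module
    have hgconv : Filter.Tendsto (fun n => ((μ:ℝ):ℂ) • g (φ n)) Filter.atTop (nhds y) := by
      have h2 : Filter.Tendsto (fun n => T (g (φ n)) - g (φ n)) Filter.atTop (nhds 0) :=
        hdiff0.comp hφmono.tendsto_atTop
      have h3 := hφtend.sub h2
      rw [sub_zero] at h3
      convert h3 using 2 with n
      exact hrel (φ n)
    have hμC : ((μ:ℝ):ℂ) ≠ 0 := by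
      rw [ne_eq, Complex.ofReal_eq_zero]
      exact hμpos.ne'
    set f₀ : H := (((μ:ℝ):ℂ))⁻¹ • y with hf₀def
    have hgf : Filter.Tendsto (fun n => g (φ n)) Filter.atTop (nhds f₀) := by
      have h4 := hgconv.const_smul ((((μ:ℝ):ℂ))⁻¹)
      simp only [inv_smul_smul₀ hμC] at h4
      exact h4
    have hnf : ‖f₀‖ = 1 := by
      have h5 : Filter.Tendsto (fun n => ‖g (φ n)‖) Filter.atTop (nhds ‖f₀‖) :=
        (continuous_norm.tendsto f₀).comp hgf
      have h6 : Filter.Tendsto (fun n => ‖g (φ n)‖) Filter.atTop (nhds 1) := by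
        have : (fun n => ‖g (φ n)‖) = fun _ => (1:ℝ) := funext fun n => hg1 (φ n)
        rw [this]
        exact tendsto_const_nhds
      exact tendsto_nhds_unique h5 h6
    have hTcont : Continuous fun z : H => (inner ℂ (T z) z : ℂ).re :=
      Complex.continuous_re.comp (T.continuous.inner continuous_id)
    have hQf : (inner ℂ (T f₀) f₀ : ℂ).re = 1 := by
      have h7 : Filter.Tendsto (fun n => (inner ℂ (T (g (φ n))) (g (φ n)) : ℂ).re)
          Filter.atTop (nhds ((inner ℂ (T f₀) f₀ : ℂ).re)) :=
        (hTcont.tendsto f₀).comp hgf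
      have h8 : Filter.Tendsto (fun n => x (φ n)) Filter.atTop (nhds 1) :=
        hxtend.comp hφmono.tendsto_atTop
      exact tendsto_nhds_unique h7 h8
    refine ⟨f₀, ?_, ?_⟩
    · intro h
      rw [h, norm_zero] at hnf
      norm_num at hnf
    · rw [← hT_inner, hQf, hnf]
      norm_num
  -- Step E : part (b)
  have hmul : ∀ g : H, ((lam ^ 2 : ℝ) : ℂ) • T g
      = (16 : ℝ) • W (W g) + (8 * m * lam) • K g := by
    intro g
    have e1 : lam ^ 2 * (16 / lam ^ 2) = 16 := by field_simp
    have e2 : lam ^ 2 * (8 * m / lam) = 8 * m * lam := by field_simp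
    rw [hTdef]
    simp only [ContinuousLinearMap.add_apply, ContinuousLinearMap.smul_apply,
      ContinuousLinearMap.comp_apply, smul_add, smul_smul, ← Complex.ofReal_mul, e1, e2,
      Complex.coe_smul]
  have hTf_iff : ∀ g : H, (T g = g ↔
      (16 : ℝ) • W (W g) + (8 * m * lam) • K g = (lam ^ 2) • g) := by
    intro g
    constructor
    · intro hTg
      rw [← hmul, hTg, Complex.coe_smul]
    · intro heq
      have hc : ((lam ^ 2 : ℝ) : ℂ) ≠ 0 := by
        simp only [ne_eq, Complex.ofReal_eq_zero]
        positivity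
      apply smul_right_injective H hc
      show ((lam ^ 2 : ℝ) : ℂ) • T g = ((lam ^ 2 : ℝ) : ℂ) • g
      rw [hmul, heq, Complex.coe_smul]
  have hb : ∀ g : H,
      (16 / lam ^ 2 * ‖W g‖ ^ 2 + 8 * m / lam * (inner ℂ (K g) g : ℂ).re = ‖g‖ ^ 2
        ↔ (16 : ℝ) • W (W g) + (8 * m * lam) • K g = (lam ^ 2) • g) := by
    intro g
    rw [← hTf_iff]
    constructor
    · intro heq
      have hPsa : IsSelfAdjoint ((1 : H →L[ℂ] H) - T) := (IsSelfAdjoint.one (R := H →L[ℂ] H)).sub hTsa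
      have hinner : ∀ x : H, (inner ℂ (((1 : H →L[ℂ] H) - T) x) x : ℂ).re
          = ‖x‖ ^ 2 - (inner ℂ (T x) x : ℂ).re := by
        intro x
        simp only [ContinuousLinearMap.sub_apply, ContinuousLinearMap.one_apply,
          inner_sub_left, Complex.sub_re]
        rw [← RCLike.re_to_complex, inner_self_eq_norm_sq]
      have hP0 : ∀ x : H, 0 ≤ (inner ℂ (((1 : H →L[ℂ] H) - T) x) x : ℂ).re := by
        intro x; rw [hinner]; linarith [hT1 x]
      have hPg : (inner ℂ (((1 : H →L[ℂ] H) - T) g) g : ℂ).re = 0 := by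
        rw [hinner, hT_inner, heq]; ring
      have := st4_pos_ker hPsa hP0 hPg
      simp only [ContinuousLinearMap.sub_apply, ContinuousLinearMap.one_apply,
        sub_eq_zero] at this
      exact this.symm
    · intro hTg
      rw [← hT_inner, hTg, ← RCLike.re_to_complex, inner_self_eq_norm_sq]
  -- operator identities
  have hUU : ∀ x : H, U (U x) = x := by
    intro x
    have := DFunLike.congr_fun hU2 x
    simpa using this
  have hKUW : ∀ x : H, K (U (W x)) = -W (U (K x)) := by
    intro x
    have := DFunLike.congr_fun hanti x
    simp only [ContinuousLinearMap.add_apply, ContinuousLinearMap.comp_apply,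
      ContinuousLinearMap.zero_apply] at this
    have h2 := congrArg U this
    rw [map_add, hUU, hUU, map_zero] at h2
    exact eq_neg_of_add_eq_zero_left h2
  have hWUW : ∀ z : H, W (U (W z)) = -((1/4:ℂ) • U z) := by
    intro z
    have h1 := DFunLike.congr_fun hUW2 z
    simp only [ContinuousLinearMap.comp_apply, ContinuousLinearMap.neg_apply,
      ContinuousLinearMap.smul_apply, ContinuousLinearMap.one_apply] at h1
    have h2 := congrArg U h1
    rw [hUU, map_neg, map_smul] at h2
    exact h2
  have hUWinj : ∀ z : H, U (W z) = 0 → z = 0 := by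
    intro z hz
    have h1 := DFunLike.congr_fun hUW2 z
    simp only [ContinuousLinearMap.comp_apply, ContinuousLinearMap.neg_apply,
      ContinuousLinearMap.smul_apply, ContinuousLinearMap.one_apply] at h1
    rw [hz, map_zero, map_zero] at h1
    have h2 : (1/4:ℂ) • z = 0 := by
      rw [← neg_eq_zero]
      exact h1.symm
    rcases smul_eq_zero.mp h2 with h3 | h3
    · norm_num at h3
    · exact h3
  have heig := (hb f).mp hfeq
  have hKfC : ((8*m*lam:ℝ):ℂ) • K f = ((lam^2:ℝ):ℂ) • f - ((16:ℝ):ℂ) • W (W f) := by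
    have h1 : (8 * m * lam) • K f = (lam^2:ℝ) • f - (16:ℝ) • W (W f) :=
      eq_sub_of_add_eq' heig
    simpa only [← Complex.coe_smul] using h1
  set c : ℂ := ((8*m*lam : ℝ):ℂ) with hcdef
  have hc0 : c ≠ 0 := by
    rw [hcdef, ne_eq, Complex.ofReal_eq_zero]
    positivity
  have hm' : (m:ℂ) ≠ 0 := by
    rw [ne_eq, Complex.ofReal_eq_zero]; exact hm.ne'
  have hlam' : ((lam:ℝ):ℂ) ≠ 0 := by
    rw [ne_eq, Complex.ofReal_eq_zero]; exact hlam_ne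
  have hKu : c • K (U (W f)) = -(((lam^2:ℝ):ℂ) • W (U f)) - (4:ℂ) • U (W f) := by
    rw [hKUW f, smul_neg, ← map_smul, ← map_smul, hKfC]
    rw [map_sub, map_sub, map_smul, map_smul, map_smul, map_smul, hWUW (W f)]
    push_cast
    module
  have hKu' : K (U (W f)) = c⁻¹ • (-(((lam^2:ℝ):ℂ) • W (U f)) - (4:ℂ) • U (W f)) := by
    rw [← hKu, inv_smul_smul₀ hc0]
  have huWf : U (W f) ≠ 0 := fun hz => hf0 (hUWinj f hz)
  refine ⟨⟨f, hf0, hfeq⟩, fun g _ => hb g, ?_, ?_⟩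
  · refine ⟨U (W f), ((lam/4 : ℝ):ℂ) • U f, ?_, ?_, ?_⟩
    · intro hpair
      exact huWf (congrArg Prod.fst hpair)
    · rw [map_smul, hKu']
      rw [hcdef]
      push_cast
      match_scalars
      all_goals simp only [Complex.coe_algebraMap]
      all_goals field_simp
      all_goals try ring
      all_goals tauto
    · rw [hWUW f]
      match_scalars
      all_goals simp only [Complex.coe_algebraMap]
      all_goals field_simp
      all_goals try ring
      all_goals tauto
  · refine ⟨((-(lam/4) : ℝ):ℂ) • U f, U (W f), ?_, ?_, ?_⟩
    · intro hpair
      exact huWf (congrArg Prod.snd hpair)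
    · rw [hWUW f]
      match_scalars
      all_goals simp only [Complex.coe_algebraMap]
      all_goals field_simp
      all_goals try ring
      all_goals tauto
    · rw [map_smul, hKu']
      rw [hcdef]
      push_cast
      match_scalars
      all_goals simp only [Complex.coe_algebraMap]
      all_goals field_simp
      all_goals try ring
      all_goals tauto
end

section
/- For every real λ ≠ 0, ker(1/λ + C⁺) ≠ 0 if and only if ker(−1/λ + C⁻) ≠ 0. That is, there exists a nonzero (u,h) with 2mKu + Wh = −u/λ and Wu = −h/λ if and only if there exists a nonzero (u,h) with Wh = u/λ and Wu − 2mKh = h/λ. -/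
/-- In the shell-interaction setting, with
`C⁺(u,h) = (2mKu + Wh, Wu)` and `C⁻(u,h) = (Wh, Wu - 2mKh)` on `ℋ ⊕ ℋ`:
for every real `λ ≠ 0`, `ker(1/λ + C⁺) ≠ 0` iff `ker(-1/λ + C⁻) ≠ 0`; i.e. there is a
nonzero `(u,h)` with `2mKu + Wh = -u/λ` and `Wu = -h/λ` iff there is a nonzero `(u,h)`
with `Wh = u/λ` and `Wu - 2mKh = h/λ`. -/
theorem statement5
    {H : Type*} [NormedAddCommGroup H] [InnerProductSpace ℂ H] [CompleteSpace H]
    (U K W : H →L[ℂ] H) (m : ℝ) (hm : 0 < m)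
    (hU : IsSelfAdjoint U) (hK : IsSelfAdjoint K) (hW : IsSelfAdjoint W)
    (hU2 : U ∘L U = 1)
    (hKpos : ∀ f : H, 0 ≤ (inner ℂ (K f) f : ℂ).re)
    (hanti : (U ∘L K) ∘L (U ∘L W) + (U ∘L W) ∘L (U ∘L K) = 0)
    (hUW2 : (U ∘L W) ∘L (U ∘L W) = -((1/4 : ℂ) • (1 : H →L[ℂ] H)))
    (l : ℝ) (hl : l ≠ 0) :
    (∃ u h : H, (u, h) ≠ (0, 0) ∧
        (2 * m) • K u + W h = (-(1 / l)) • u ∧ W u = (-(1 / l)) • h)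
      ↔
    (∃ u h : H, (u, h) ≠ (0, 0) ∧
        W h = (1 / l) • u ∧ W u - (2 * m) • K h = (1 / l) • h) := by
  constructor
  · rintro ⟨u, h, hne, h1, h2⟩
    refine ⟨-h, u, ?_, ?_, ?_⟩
    · intro hc
      apply hne
      have h1 : -h = 0 := (Prod.mk.injEq _ _ _ _ ▸ hc).1
      have h2 : u = 0 := (Prod.mk.injEq _ _ _ _ ▸ hc).2
      simp [h2, neg_eq_zero.mp h1]
    · rw [h2, smul_neg, neg_smul]
    · have e : W (-h) - (2 * m) • K u = -((2 * m) • K u + W h) := by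
        rw [map_neg]; abel
      rw [e, h1, neg_smul, neg_neg]
  · rintro ⟨u, h, hne, h1, h2⟩
    refine ⟨h, -u, ?_, ?_, ?_⟩
    · intro hc
      apply hne
      have e1 : h = 0 := (Prod.mk.injEq _ _ _ _ ▸ hc).1
      have e2 : -u = 0 := (Prod.mk.injEq _ _ _ _ ▸ hc).2
      simp [e1, neg_eq_zero.mp e2]
    · have e : (2 * m) • K h + W (-u) = -(W u - (2 * m) • K h) := by
        rw [map_neg]; abel
      rw [e, h2, neg_smul]
    · rw [h1, smul_neg, neg_smul, neg_neg]
end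

section
/- Let a ∈ [−m,m] and suppose the bounded self-adjoint operators K, W on ℋ satisfy the anticommutation relation (UK)(UW) + (UW)(UK) = 0 and the identity (UW)² + (a² − m²)(UK)² = −(1/4)·Id, where U is bounded self-adjoint with U² = 1. Define C^a on ℋ ⊕ ℋ by C^a(u,h) = ((a+m)Ku + Wh, Wu + (a−m)Kh). Then for every real λ ≠ 0: ker(1/λ + C^a) ≠ 0 if and only if ker(−λ/4 + C^a) ≠ 0. -/
/-- Let `ℋ` be a complex Hilbert space, `m > 0`, `a ∈ [-m,m]`, and let
`U, K, W` be bounded self-adjoint operators with `U² = 1`, `(UK)(UW) + (UW)(UK) = 0` and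
`(UW)² + (a² - m²)(UK)² = -(1/4)·Id`.  Define `C^a` on `ℋ ⊕ ℋ` by
`C^a(u,h) = ((a+m)Ku + Wh, Wu + (a-m)Kh)`.  Then for every real `λ ≠ 0`:
`ker(1/λ + C^a) ≠ 0` iff `ker(-λ/4 + C^a) ≠ 0`. -/
theorem statement6
    {H : Type*} [NormedAddCommGroup H] [InnerProductSpace ℂ H] [CompleteSpace H]
    (U K W : H →L[ℂ] H) (m : ℝ) (hm : 0 < m) (a : ℝ) (ha : a ∈ Set.Icc (-m) m)
    (hU : IsSelfAdjoint U) (hK : IsSelfAdjoint K) (hW : IsSelfAdjoint W)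
    (hU2 : U ∘L U = 1)
    (hanti : (U ∘L K) ∘L (U ∘L W) + (U ∘L W) ∘L (U ∘L K) = 0)
    (hid : (U ∘L W) ∘L (U ∘L W) + ((a ^ 2 - m ^ 2 : ℝ) • ((U ∘L K) ∘L (U ∘L K)))
        = -((1/4 : ℂ) • (1 : H →L[ℂ] H)))
    (l : ℝ) (hl : l ≠ 0) :
    (∃ u h : H, (u, h) ≠ (0, 0) ∧
        (a + m) • K u + W h = (-(1 / l)) • u ∧
        W u + (a - m) • K h = (-(1 / l)) • h)
      ↔
    (∃ u h : H, (u, h) ≠ (0, 0) ∧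
        (a + m) • K u + W h = (l / 4) • u ∧
        W u + (a - m) • K h = (l / 4) • h) := by
  have hUU : ∀ x : H, U (U x) = x := by
    intro x
    have := ContinuousLinearMap.ext_iff.mp hU2 x
    simpa using this
  have H1 : ∀ x : H, K (U (W x)) + W (U (K x)) = 0 := by
    intro x
    have h0 := ContinuousLinearMap.ext_iff.mp hanti x
    simp only [ContinuousLinearMap.add_apply, ContinuousLinearMap.comp_apply,
      ContinuousLinearMap.zero_apply] at h0
    have h1 := congrArg U h0
    simpa [map_add, hUU] using h1
  have H2 : ∀ x : H, W (U (W x)) + (a ^ 2 - m ^ 2 : ℝ) • K (U (K x))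
      = -((1/4 : ℂ) • U x) := by
    intro x
    have h0 := ContinuousLinearMap.ext_iff.mp hid x
    simp only [ContinuousLinearMap.add_apply, ContinuousLinearMap.comp_apply,
      ContinuousLinearMap.smul_apply, ContinuousLinearMap.neg_apply,
      ContinuousLinearMap.one_apply] at h0
    have h1 := congrArg U h0
    simpa [map_add, map_smul, hUU] using h1
  have key : ∀ (μ ν : ℝ), μ ≠ 0 → μ * ν = -(1/4 : ℝ) →
      (∃ u h : H, (u, h) ≠ (0, 0) ∧
        (a + m) • K u + W h = μ • u ∧ W u + (a - m) • K h = μ • h) →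
      (∃ u h : H, (u, h) ≠ (0, 0) ∧
        (a + m) • K u + W h = ν • u ∧ W u + (a - m) • K h = ν • h) := by
    rintro μ ν hμ hμν ⟨u, h, hne, e1, e2⟩
    refine ⟨U h, U u, ?_, ?_, ?_⟩
    · intro hc
      apply hne
      have h1 : U h = 0 := (Prod.mk.injEq _ _ _ _ ▸ hc).1
      have h2 : U u = 0 := (Prod.mk.injEq _ _ _ _ ▸ hc).2
      have : u = 0 := by rw [← hUU u, h2, map_zero]
      have : h = 0 := by rw [← hUU h, h1, map_zero]
      simp_all
    · apply smul_right_injective H hμ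
      show μ • _ = μ • _
      have step : μ • ((a + m) • K (U h) + W (U u))
          = (a + m) • K (U (μ • h)) + W (U (μ • u)) := by
        simp [ContinuousLinearMap.map_smul_of_tower, smul_add, smul_comm μ (a + m)]
      rw [step, ← e1, ← e2]
      have expand : (a + m) • K (U (W u + (a - m) • K h)) + W (U ((a + m) • K u + W h))
          = (a + m) • (K (U (W u)) + W (U (K u)))
            + (W (U (W h)) + (a ^ 2 - m ^ 2 : ℝ) • K (U (K h))) := by
        simp only [map_add, ContinuousLinearMap.map_smul_of_tower, smul_add, smul_smul]
        module
      rw [expand, H1 u, H2 h, smul_zero, zero_add]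
      rw [smul_smul, hμν]
      push_cast
      rw [neg_smul, ← Complex.coe_smul]
      push_cast
      ring_nf
    · apply smul_right_injective H hμ
      show μ • _ = μ • _
      have step : μ • (W (U h) + (a - m) • K (U u))
          = W (U (μ • h)) + (a - m) • K (U (μ • u)) := by
        simp [ContinuousLinearMap.map_smul_of_tower, smul_add, smul_comm μ (a - m)]
      rw [step, ← e1, ← e2]
      have expand : W (U (W u + (a - m) • K h)) + (a - m) • K (U ((a + m) • K u + W h))
          = (a - m) • (W (U (K h)) + K (U (W h)))
            + (W (U (W u)) + (a ^ 2 - m ^ 2 : ℝ) • K (U (K u))) := by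
        simp only [map_add, ContinuousLinearMap.map_smul_of_tower, smul_add, smul_smul]
        module
      rw [expand]
      have h1' : W (U (K h)) + K (U (W h)) = 0 := by
        rw [add_comm]; exact H1 h
      rw [h1', H2 u, smul_zero, zero_add]
      rw [smul_smul, hμν]
      push_cast
      rw [neg_smul, ← Complex.coe_smul]
      push_cast
      ring_nf
  constructor
  · exact key (-(1/l)) (l/4) (by simp [hl]) (by field_simp)
  · exact key (l/4) (-(1/l)) (by simp [hl]) (by field_simp)
end

section
/- Let ℋ be a complex Hilbert space and let U, W be bounded self-adjoint operators on ℋ with U² = 1 and (UW)² = −(1/4)·Id. Then: (a) ‖W‖ ≥ 1/2; (b) ‖W‖ = 1/2 if and only if the anticommutator UW + WU = 0; (c) if UW + WU = 0 then 2W is an isometry, i.e. ‖2Wf‖ = ‖f‖ for all f ∈ ℋ. -/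
open ContinuousLinearMap in
/-- Let `ℋ` be a (nontrivial) complex Hilbert space and `U, W` bounded
self-adjoint operators with `U² = 1` and `(UW)² = -(1/4)·Id`.  Then:
(a) `‖W‖ ≥ 1/2`;
(b) `‖W‖ = 1/2` iff the anticommutator `UW + WU = 0`;
(c) if `UW + WU = 0` then `2W` is an isometry: `‖2Wf‖ = ‖f‖` for all `f`. -/
theorem statement7
    {H : Type*} [NormedAddCommGroup H] [InnerProductSpace ℂ H] [CompleteSpace H]
    [Nontrivial H]
    (U W : H →L[ℂ] H)
    (hU : IsSelfAdjoint U) (hW : IsSelfAdjoint W)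
    (hU2 : U ∘L U = 1)
    (hUW2 : (U ∘L W) ∘L (U ∘L W) = -((1/4 : ℂ) • (1 : H →L[ℂ] H))) :
    (1 / 2 ≤ ‖W‖) ∧
    (‖W‖ = 1 / 2 ↔ U ∘L W + W ∘L U = 0) ∧
    (U ∘L W + W ∘L U = 0 → ∀ f : H, ‖((2 : ℂ) • W) f‖ = ‖f‖) := by
  have hU' : adjoint U = U := hU
  have hW' : adjoint W = W := hW
  have hU2' : ∀ f : H, U (U f) = f := by
    intro f
    have := congrFun (congrArg DFunLike.coe hU2) f
    simpa using this
  have hUW2' : ∀ f : H, U (W (U (W f))) = -((1/4 : ℂ) • f) := by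
    intro f
    have := congrFun (congrArg DFunLike.coe hUW2) f
    simpa using this
  have hUinner : ∀ f g : H, (inner ℂ (U f) g : ℂ) = inner ℂ f (U g) := by
    intro f g
    conv_lhs => rw [← hU']
    exact adjoint_inner_left U g f
  have hWinner : ∀ f g : H, (inner ℂ (W f) g : ℂ) = inner ℂ f (W g) := by
    intro f g
    conv_lhs => rw [← hW']
    exact adjoint_inner_left W g f
  have hUiso : ∀ f : H, ‖U f‖ = ‖f‖ := by
    intro f
    have h1 : (inner ℂ (U f) (U f) : ℂ) = inner ℂ f f := by rw [hUinner, hU2']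
    rw [inner_self_eq_norm_sq_to_K, inner_self_eq_norm_sq_to_K] at h1
    have h2 : ‖U f‖ ^ 2 = ‖f‖ ^ 2 := by exact_mod_cast h1
    nlinarith [norm_nonneg (U f), norm_nonneg f]
  have hWUW' : ∀ f : H, W (U (W f)) = -((1/4 : ℂ) • U f) := by
    intro f
    have := congrArg U (hUW2' f)
    rw [hU2'] at this
    rw [this, map_neg, map_smul]
  -- part (a)
  have ha : 1 / 2 ≤ ‖W‖ := by
    obtain ⟨f, hf⟩ := exists_ne (0 : H)
    have hfpos : 0 < ‖f‖ := norm_pos_iff.mpr hf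
    have h1 : ‖W (U (W f))‖ = (1/4) * ‖f‖ := by
      rw [hWUW' f, norm_neg, norm_smul, hUiso]
      norm_num
    have key : (1/4) * ‖f‖ ≤ ‖W‖ * (‖W‖ * ‖f‖) := by
      calc (1/4) * ‖f‖ = ‖W (U (W f))‖ := h1.symm
        _ ≤ ‖W‖ * ‖U (W f)‖ := W.le_opNorm _
        _ = ‖W‖ * ‖W f‖ := by rw [hUiso]
        _ ≤ ‖W‖ * (‖W‖ * ‖f‖) := by
            have h3 := W.le_opNorm f
            have h0 : (0:ℝ) ≤ ‖W‖ := norm_nonneg W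
            nlinarith
    by_contra hcon
    push_neg at hcon
    have h4 : ‖W‖ * ‖W‖ < 1/4 := by nlinarith [norm_nonneg W]
    nlinarith
  -- if anticommutator vanishes, then W² = (1/4)•1 pointwise
  have hanti_sq : (U ∘L W + W ∘L U = 0) → ∀ f : H, W (W f) = (1/4 : ℂ) • f := by
    intro hanti f
    have hpt : ∀ g : H, W (U g) = -(U (W g)) := by
      intro g
      have := congrFun (congrArg DFunLike.coe hanti) g
      simp only [ContinuousLinearMap.add_apply, ContinuousLinearMap.comp_apply,
        ContinuousLinearMap.zero_apply] at this
      exact eq_neg_of_add_eq_zero_right this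
    calc W (W f) = W (U (U (W f))) := by rw [hU2']
      _ = -(U (W (U (W f)))) := hpt (U (W f))
      _ = (1/4 : ℂ) • f := by rw [hUW2']; simp
  -- norm of W f under W² = (1/4)•1
  have hWnorm : (∀ f : H, W (W f) = (1/4 : ℂ) • f) → ∀ f : H, ‖W f‖ = (1/2) * ‖f‖ := by
    intro hWW f
    have h1 : (inner ℂ (W f) (W f) : ℂ) = (1/4 : ℂ) * inner ℂ f f := by
      rw [hWinner, hWW, inner_smul_right]
    rw [inner_self_eq_norm_sq_to_K, inner_self_eq_norm_sq_to_K] at h1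
    have h2 : ‖W f‖ ^ 2 = 1/4 * ‖f‖ ^ 2 := by
      have := congrArg Complex.re h1
      simpa [Complex.mul_re, ← Complex.ofReal_pow] using this
    nlinarith [norm_nonneg (W f), norm_nonneg f]
  -- (b) reverse direction + (c)
  have hbc : (U ∘L W + W ∘L U = 0) → ∀ f : H, ‖W f‖ = (1/2) * ‖f‖ :=
    fun hanti => hWnorm (hanti_sq hanti)
  refine ⟨ha, ⟨?_, ?_⟩, ?_⟩
  · -- ‖W‖ = 1/2 → anticommutator = 0
    intro hnorm
    -- step 1: ‖W g‖ = (1/2) ‖g‖ for all g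
    have hiso : ∀ g : H, ‖W g‖ = (1/2) * ‖g‖ := by
      intro g
      have hle : ‖W g‖ ≤ (1/2) * ‖g‖ := by
        have := W.le_opNorm g
        rw [hnorm] at this
        linarith
      have hge : (1/2) * ‖g‖ ≤ ‖W g‖ := by
        have h1 : W (U (W g)) = -((1/4 : ℂ) • U g) := hWUW' g
        have h2 : ‖U g‖ = 4 * ‖W (U (W g))‖ := by
          rw [h1, norm_neg, norm_smul]
          have h14 : ‖(1/4 : ℂ)‖ = 1/4 := by norm_num
          rw [h14]
          ring
        have h3 : ‖W (U (W g))‖ ≤ (1/2) * ‖U (W g)‖ := by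
          have := W.le_opNorm (U (W g))
          rw [hnorm] at this
          linarith
        rw [hUiso] at h2
        rw [hUiso] at h3
        linarith
      linarith
    -- step 2: W ∘ W = (1/4) • 1
    have hWW : ∀ f : H, W (W f) = (1/4 : ℂ) • f := by
      have hT : ((W ∘L W - (1/4 : ℂ) • (1 : H →L[ℂ] H) : H →L[ℂ] H) : H →ₗ[ℂ] H) = 0 := by
        rw [← inner_map_self_eq_zero]
        intro x
        have h1 : (inner ℂ (W (W x)) x : ℂ) = inner ℂ (W x) (W x) := by
          rw [hWinner]
        have h2 : (inner ℂ (W x) (W x) : ℂ) = (1/4 : ℂ) * inner ℂ x x := by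
          rw [inner_self_eq_norm_sq_to_K, inner_self_eq_norm_sq_to_K, hiso]
          push_cast
          ring
        simp only [ContinuousLinearMap.coe_coe, ContinuousLinearMap.sub_apply,
          ContinuousLinearMap.comp_apply, ContinuousLinearMap.smul_apply,
          ContinuousLinearMap.one_apply, inner_sub_left, inner_smul_left]
        rw [h1, h2]
        simp [map_ofNat]
      intro f
      have := congrFun (congrArg DFunLike.coe hT) f
      simp only [ContinuousLinearMap.coe_coe, ContinuousLinearMap.sub_apply,
        ContinuousLinearMap.comp_apply, ContinuousLinearMap.smul_apply,
        ContinuousLinearMap.one_apply, LinearMap.zero_apply] at this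
      exact sub_eq_zero.mp this
    -- step 3: the anticommutator S satisfies S(S f) = 0 and is symmetric, hence S = 0
    have hSS : ∀ f : H, W (U (U (W f))) + W (U (W (U f)))
        + (U (W (U (W f))) + U (W (W (U f)))) = 0 := by
      intro f
      rw [hUW2' f, hWW (U f), hU2' (W f), hWW f, hWUW' (U f)]
      simp only [map_smul, hU2' f]
      abel
    ext f
    simp only [ContinuousLinearMap.add_apply, ContinuousLinearMap.comp_apply,
      ContinuousLinearMap.zero_apply]
    set v : H := U (W f) + W (U f) with hv
    have hinner : (inner ℂ v v : ℂ) = 0 := by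
      have hz2 : W (U v) + U (W v) = 0 := by
        rw [hv]
        simp only [map_add]
        exact hSS f
      have e1 : (inner ℂ v v : ℂ) = inner ℂ (U (W f)) v + inner ℂ (W (U f)) v := by
        conv_lhs => rw [hv]
        rw [inner_add_left]
      rw [e1, hUinner, hWinner, hWinner, hUinner, ← inner_add_right, hz2,
        inner_zero_right]
    exact inner_self_eq_zero.mp hinner
  · exact fun hanti => by
      have h := hbc hanti
      refine le_antisymm ?_ ?_
      · exact W.opNorm_le_bound (by norm_num) (fun f => by rw [h f])
      · exact ha
  · intro hanti f
    have h := hbc hanti f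
    rw [ContinuousLinearMap.smul_apply, norm_smul, h]
    simp
end

section
/- Let m > 0, a ∈ [−m,m], κ = √(m² − a²). For every x ∈ ℝ³ \ {0}, applying the operator −i α·∇ + mβ + a·I₄ to the M₄(ℂ)-valued function y ↦ (e^{−κ|y|}/(4π|y|))·I₄ and evaluating at x yields exactly φ^a(x). Equivalently, −i Σⱼ αⱼ ∂ⱼ(e^{−κ|x|}/(4π|x|)) + (mβ + a)(e^{−κ|x|}/(4π|x|)) = φ^a(x). -/
open scoped Real Matrix

noncomputable section

/-- The three Pauli matrices in `M₂(ℂ)`. -/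
def pauli : Fin 3 → Matrix (Fin 2) (Fin 2) ℂ :=
  ![!![0, 1; 1, 0], !![0, -Complex.I; Complex.I, 0], !![1, 0; 0, -1]]

/-- The Dirac matrices `αⱼ = [[0, σⱼ], [σⱼ, 0]]` in `M₄(ℂ)`
(indexed by `Fin 2 ⊕ Fin 2`). -/
def alphaM (j : Fin 3) : Matrix (Fin 2 ⊕ Fin 2) (Fin 2 ⊕ Fin 2) ℂ :=
  Matrix.fromBlocks 0 (pauli j) (pauli j) 0

/-- The Dirac matrix `β = [[I₂, 0], [0, -I₂]]` in `M₄(ℂ)`. -/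
def betaM : Matrix (Fin 2 ⊕ Fin 2) (Fin 2 ⊕ Fin 2) ℂ :=
  Matrix.fromBlocks 1 0 0 (-1)

/-- `α·v = Σⱼ vⱼαⱼ` for `v ∈ ℝ³`. -/
def alphaDot (v : EuclideanSpace ℝ (Fin 3)) : Matrix (Fin 2 ⊕ Fin 2) (Fin 2 ⊕ Fin 2) ℂ :=
  ∑ j : Fin 3, (v j : ℂ) • alphaM j

/-- The fundamental solution `φ^a` of the Dirac operator `H - a`, `H = -iα·∇ + mβ`:
`φ^a(x) = (e^{-κ|x|}/(4π|x|)) (a·I₄ + mβ + (1 + κ|x|) i α·x/|x|²)`, `κ = √(m² - a²)`. -/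
def phiFS (m a : ℝ) (x : EuclideanSpace ℝ (Fin 3)) :
    Matrix (Fin 2 ⊕ Fin 2) (Fin 2 ⊕ Fin 2) ℂ :=
  ((Real.exp (-(Real.sqrt (m ^ 2 - a ^ 2)) * ‖x‖) / (4 * π * ‖x‖) : ℝ) : ℂ) •
    ((a : ℂ) • (1 : Matrix (Fin 2 ⊕ Fin 2) (Fin 2 ⊕ Fin 2) ℂ) + (m : ℂ) • betaM +
      (((1 + Real.sqrt (m ^ 2 - a ^ 2) * ‖x‖) / ‖x‖ ^ 2 : ℝ) : ℂ) •
        Complex.I • alphaDot x)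

end

/-- For `m > 0`, `a ∈ [-m,m]`, `κ = √(m²-a²)` and `x ≠ 0`, applying
`-iα·∇ + mβ + a` to the Yukawa kernel `y ↦ e^{-κ|y|}/(4π|y|)` (times `I₄`) at `x`
yields exactly `φ^a(x)`. -/
theorem statement11 (m a : ℝ) (hm : 0 < m) (ha : a ∈ Set.Icc (-m) m)
    (x : EuclideanSpace ℝ (Fin 3)) (hx : x ≠ 0) :
    (-Complex.I) • (∑ j : Fin 3,
        ((fderiv ℝ (fun y : EuclideanSpace ℝ (Fin 3) =>
            Real.exp (-(Real.sqrt (m ^ 2 - a ^ 2)) * ‖y‖) / (4 * π * ‖y‖))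
          x (EuclideanSpace.single j 1) : ℝ) : ℂ) • alphaM j)
      + ((Real.exp (-(Real.sqrt (m ^ 2 - a ^ 2)) * ‖x‖) / (4 * π * ‖x‖) : ℝ) : ℂ) •
          ((m : ℂ) • betaM + (a : ℂ) • (1 : Matrix (Fin 2 ⊕ Fin 2) (Fin 2 ⊕ Fin 2) ℂ))
      = phiFS m a x := by

  have hr : (0:ℝ) < ‖x‖ := norm_pos_iff.2 hx
  have hπ : (0:ℝ) < π := Real.pi_pos
  set κ := Real.sqrt (m ^ 2 - a ^ 2) with hκ
  set r := ‖x‖ with hrdef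
  -- derivative of the norm
  have hnorm : HasFDerivAt (fun y : EuclideanSpace ℝ (Fin 3) => ‖y‖)
      ((r⁻¹ : ℝ) • innerSL ℝ x) x := by
    have h1 := (hasStrictFDerivAt_norm_sq x).hasFDerivAt
    have h2 : HasDerivAt Real.sqrt (1 / (2 * Real.sqrt (‖x‖ ^ 2))) (‖x‖ ^ 2) :=
      Real.hasDerivAt_sqrt (by positivity)
    have h3 := h2.comp_hasFDerivAt x h1
    rw [show (Real.sqrt ∘ fun y : EuclideanSpace ℝ (Fin 3) => ‖y‖ ^ 2) = fun y => ‖y‖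
      from funext fun y => Real.sqrt_sq (norm_nonneg y)] at h3
    refine h3.congr_fderiv ?_
    symm
    rw [Real.sqrt_sq hr.le]
    ext v
    simp only [ContinuousLinearMap.coe_smul', Pi.smul_apply, smul_eq_mul,
      ContinuousLinearMap.smul_apply]
    rw [two_smul]
    field_simp
    ring
  -- derivative of the radial function
  have hf : HasDerivAt (fun t : ℝ => Real.exp (-κ * t) / (4 * π * t))
      (-(Real.exp (-κ * r) * (1 + κ * r)) / (4 * π * r ^ 2)) r := by
    have h1 : HasDerivAt (fun t : ℝ => Real.exp (-κ * t)) (Real.exp (-κ * r) * (-κ)) r := by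
      simpa using ((hasDerivAt_id r).const_mul (-κ)).exp
    have h2 : HasDerivAt (fun t : ℝ => 4 * π * t) (4 * π) r := by
      simpa using (hasDerivAt_id r).const_mul (4 * π)
    have h3 := h1.div h2 (by positivity)
    refine h3.congr_deriv ?_
    field_simp
    ring
  have hcomp : HasFDerivAt (fun y : EuclideanSpace ℝ (Fin 3) => Real.exp (-κ * ‖y‖) / (4 * π * ‖y‖))
      ((-(Real.exp (-κ * r) * (1 + κ * r)) / (4 * π * r ^ 2)) • ((r⁻¹ : ℝ) • innerSL ℝ x)) x :=
    by have := hf.comp_hasFDerivAt x hnorm; exact this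
  have hfd := hcomp.fderiv
  rw [hfd]
  have happ : ∀ j : Fin 3,
      ((-(Real.exp (-κ * r) * (1 + κ * r)) / (4 * π * r ^ 2)) •
        ((r⁻¹ : ℝ) • innerSL ℝ x)) (EuclideanSpace.single j 1)
        = -(Real.exp (-κ * r) * (1 + κ * r)) / (4 * π * r ^ 2) * (r⁻¹ * x j) := by
    intro j
    simp [EuclideanSpace.inner_single_right, real_inner_comm]
  simp only [happ]
  have hscal : ∀ j : Fin 3,
      (-Complex.I) * ((-(Real.exp (-κ * r) * (1 + κ * r)) / (4 * π * r ^ 2) * (r⁻¹ * x j) : ℝ) : ℂ)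
      = ((Real.exp (-κ * r) / (4 * π * r) : ℝ) : ℂ) *
        ((((1 + κ * r) / r ^ 2 : ℝ) : ℂ) * (Complex.I * (x j : ℂ))) := by
    intro j
    push_cast
    have hrC : (r : ℂ) ≠ 0 := Complex.ofReal_ne_zero.2 hr.ne'
    have hπC : (π : ℂ) ≠ 0 := Complex.ofReal_ne_zero.2 hπ.ne'
    field_simp
  rw [phiFS, alphaDot]
  simp only [Finset.smul_sum, smul_smul, smul_add]
  rw [Finset.sum_congr rfl fun j _ => by rw [hscal j]]
  abel
end

section
/- Let m > 0 and a ∈ [−m,m]. For every x ∈ ℝ³ \ {0}, (−i α·∇ + mβ − a·I₄)φ^a(x) = 0, i.e. −i Σⱼ αⱼ ∂ⱼφ^a(x) + mβ·φ^a(x) − a·φ^a(x) = 0 (each column of φ^a solves the free Dirac equation away from the origin). -/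
open scoped Real Matrix

noncomputable section
def uu (κ r : ℝ) : ℝ := Real.exp (-κ*r)/(4*π*r)
def uu' (κ r : ℝ) : ℝ := (Real.exp (-κ*r) * -κ * (4*π*r) - Real.exp (-κ*r)*(4*π))/(4*π*r)^2
def gg (κ r : ℝ) : ℝ := (1+κ*r)/r^2
def gg' (κ r : ℝ) : ℝ := (κ * r^2 - (1+κ*r)*(2*r))/(r^2)^2
end


lemma myHasFDerivAt_norm {E : Type*} [NormedAddCommGroup E] [InnerProductSpace ℝ E]
    (x : E) (hx : x ≠ 0) :
    HasFDerivAt (fun y : E => ‖y‖) ((‖x‖⁻¹ : ℝ) • (innerSL ℝ x)) x := by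
  have h1 : HasFDerivAt (fun y : E => ‖y‖ ^ 2) (2 • (innerSL ℝ x)) x := by
    simpa using (hasFDerivAt_id x).norm_sq
  have hsq : (‖x‖ ^ 2 : ℝ) ≠ 0 := by
    have : ‖x‖ ≠ 0 := norm_ne_zero_iff.mpr hx
    positivity
  have h2 := (Real.hasDerivAt_sqrt hsq).comp_hasFDerivAt x h1
  have heq : ((fun t => Real.sqrt t) ∘ fun y : E => ‖y‖ ^ 2) = fun y : E => ‖y‖ := by
    funext y; simp [Function.comp, Real.sqrt_sq (norm_nonneg y)]
  rw [heq] at h2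
  refine h2.congr_fderiv ?_
  rw [Real.sqrt_sq (norm_nonneg x)]
  ext v
  simp [two_smul]
  have : ‖x‖ ≠ 0 := norm_ne_zero_iff.mpr hx
  field_simp
  ring

lemma phiFS_apply (m a : ℝ) (y : EuclideanSpace ℝ (Fin 3)) (k l : Fin 2 ⊕ Fin 2) :
    phiFS m a y k l = ((uu (Real.sqrt (m^2-a^2)) ‖y‖ :ℝ):ℂ) *
    (((a:ℂ) * (1: Matrix (Fin 2 ⊕ Fin 2) (Fin 2 ⊕ Fin 2) ℂ) k l + (m:ℂ) * betaM k l) +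
     ((gg (Real.sqrt (m^2-a^2)) ‖y‖ : ℝ):ℂ) *
       (Complex.I * ∑ j' : Fin 3, ((y j' : ℝ):ℂ) * alphaM j' k l)) := by
  simp [phiFS, alphaDot, uu, gg, neg_mul, Matrix.smul_apply, Matrix.add_apply,
    Matrix.sum_apply, smul_eq_mul]

lemma fderiv_phiFS (m a : ℝ) (x : EuclideanSpace ℝ (Fin 3)) (hx : x ≠ 0)
    (j : Fin 3) (k l : Fin 2 ⊕ Fin 2) :
    fderiv ℝ (fun y => phiFS m a y k l) x (EuclideanSpace.single j 1) =
      ((uu' (Real.sqrt (m^2-a^2)) ‖x‖ * (x j / ‖x‖) : ℝ):ℂ) *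
        ((a:ℂ) * (1: Matrix (Fin 2 ⊕ Fin 2) (Fin 2 ⊕ Fin 2) ℂ) k l + (m:ℂ) * betaM k l)
      + (((uu' (Real.sqrt (m^2-a^2)) ‖x‖ * gg (Real.sqrt (m^2-a^2)) ‖x‖
          + uu (Real.sqrt (m^2-a^2)) ‖x‖ * gg' (Real.sqrt (m^2-a^2)) ‖x‖) * (x j / ‖x‖) : ℝ):ℂ)
          * (Complex.I * alphaDot x k l)
      + ((uu (Real.sqrt (m^2-a^2)) ‖x‖ * gg (Real.sqrt (m^2-a^2)) ‖x‖ : ℝ):ℂ)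
          * (Complex.I * alphaM j k l) := by
  set κ := Real.sqrt (m^2-a^2) with hκ
  set r := ‖x‖ with hr
  have hr0 : r ≠ 0 := norm_ne_zero_iff.mpr hx
  have hN : HasFDerivAt (fun y : EuclideanSpace ℝ (Fin 3) => ‖y‖) ((r⁻¹ : ℝ) • (innerSL ℝ x)) x :=
    myHasFDerivAt_norm x hx
  -- 1D derivatives
  have hnum : HasDerivAt (fun t : ℝ => Real.exp (-κ*t)) (Real.exp (-κ*r) * -κ) r := by
    simpa using (((hasDerivAt_id r).const_mul (-κ)).exp)
  have hden : HasDerivAt (fun t : ℝ => 4*π*t) (4*π) r := by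
    simpa using ((hasDerivAt_id r).const_mul (4*π))
  have hden0 : 4*π*r ≠ 0 := by positivity
  have hu : HasDerivAt (fun t : ℝ => Real.exp (-κ*t)/(4*π*t)) (uu' κ r) r := by
    simpa [uu'] using hnum.fun_div hden hden0
  have hgnum : HasDerivAt (fun t : ℝ => 1 + κ*t) κ r := by
    simpa using (((hasDerivAt_id r).const_mul κ).const_add 1)
  have hgden : HasDerivAt (fun t : ℝ => t^2) (2*r) r := by
    simpa [mul_comm] using hasDerivAt_pow 2 r
  have hgden0 : r^2 ≠ 0 := pow_ne_zero _ hr0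
  have hg : HasDerivAt (fun t : ℝ => (1+κ*t)/t^2) (gg' κ r) r := by
    simpa [gg'] using hgnum.fun_div hgden hgden0
  -- compositions with the norm
  have hru : HasFDerivAt (fun y : EuclideanSpace ℝ (Fin 3) => ((uu κ ‖y‖ : ℝ) : ℂ))
      (Complex.ofRealCLM.comp ((uu' κ r) • ((r⁻¹ : ℝ) • (innerSL ℝ x)))) x := by
    have h := hu.comp_hasFDerivAt x hN
    exact Complex.ofRealCLM.hasFDerivAt.comp x h
  have hrg : HasFDerivAt (fun y : EuclideanSpace ℝ (Fin 3) => ((gg κ ‖y‖ : ℝ) : ℂ))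
      (Complex.ofRealCLM.comp ((gg' κ r) • ((r⁻¹ : ℝ) • (innerSL ℝ x)))) x := by
    have h := hg.comp_hasFDerivAt x hN
    exact Complex.ofRealCLM.hasFDerivAt.comp x h
  have hSbase : ∀ j' : Fin 3, HasFDerivAt (fun y : EuclideanSpace ℝ (Fin 3) => ((y j' : ℝ) : ℂ))
      (Complex.ofRealCLM.comp (EuclideanSpace.proj j' : EuclideanSpace ℝ (Fin 3) →L[ℝ] ℝ)) x :=
    fun j' => Complex.ofRealCLM.hasFDerivAt.comp x
      (show HasFDerivAt (fun y : EuclideanSpace ℝ (Fin 3) => y j')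
        (EuclideanSpace.proj j' : EuclideanSpace ℝ (Fin 3) →L[ℝ] ℝ) x from
        (EuclideanSpace.proj j' : EuclideanSpace ℝ (Fin 3) →L[ℝ] ℝ).hasFDerivAt)
  have hS : HasFDerivAt (fun y : EuclideanSpace ℝ (Fin 3) => ∑ j' : Fin 3, ((y j' : ℝ) : ℂ) * alphaM j' k l)
      (∑ j' : Fin 3, alphaM j' k l •
        (Complex.ofRealCLM.comp (EuclideanSpace.proj j' : EuclideanSpace ℝ (Fin 3) →L[ℝ] ℝ))) x :=
    HasFDerivAt.fun_sum fun i _ => (hSbase i).mul_const _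
  have hIS := hS.const_mul Complex.I
  have hgIS := hrg.fun_mul hIS
  have hadd := hgIS.const_add ((a:ℂ) * (1: Matrix (Fin 2 ⊕ Fin 2) (Fin 2 ⊕ Fin 2) ℂ) k l + (m:ℂ) * betaM k l)
  have hfull := hru.fun_mul hadd
  have heq : (fun y => phiFS m a y k l) = (fun y : EuclideanSpace ℝ (Fin 3) =>
      ((uu κ ‖y‖ : ℝ):ℂ) *
      (((a:ℂ) * (1: Matrix (Fin 2 ⊕ Fin 2) (Fin 2 ⊕ Fin 2) ℂ) k l + (m:ℂ) * betaM k l) +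
       ((gg κ ‖y‖ : ℝ):ℂ) *
         (Complex.I * ∑ j' : Fin 3, ((y j' : ℝ):ℂ) * alphaM j' k l))) :=
    funext fun y => phiFS_apply m a y k l
  rw [heq, hfull.fderiv]
  simp only [ContinuousLinearMap.add_apply, ContinuousLinearMap.smul_apply,
    ContinuousLinearMap.coe_smul', Pi.smul_apply, ContinuousLinearMap.comp_apply,
    Complex.ofRealCLM_apply, innerSL_apply_apply, ContinuousLinearMap.sum_apply,
    PiLp.proj_apply, EuclideanSpace.inner_single_right, EuclideanSpace.single_apply,
    smul_eq_mul, alphaDot, Matrix.sum_apply, Matrix.smul_apply]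
  simp only [starRingEnd_apply, star_trivial, apply_ite Complex.ofReal, Complex.ofReal_one,
    Complex.ofReal_zero, mul_ite, mul_one, mul_zero, Finset.sum_ite_eq', Finset.mem_univ, if_true]
  push_cast
  ring

lemma betaM_sq : betaM * betaM = 1 := by
  ext k l
  rcases k with k | k <;> rcases l with l | l <;> fin_cases k <;> fin_cases l <;>
    simp [betaM, Matrix.mul_apply, Fintype.sum_sum_type, Fin.sum_univ_two,
      Matrix.fromBlocks, Matrix.one_apply]

lemma alphaDot_sq (v : EuclideanSpace ℝ (Fin 3)) :
    alphaDot v * alphaDot v = (∑ j : Fin 3, ((v j : ℂ))^2) • 1 := by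
  ext k l
  rcases k with k | k <;> rcases l with l | l <;> fin_cases k <;> fin_cases l <;>
    · simp [alphaDot, alphaM, pauli, Matrix.mul_apply, Fintype.sum_sum_type, Fin.sum_univ_two,
        Fin.sum_univ_three, Matrix.fromBlocks, Matrix.sum_apply, Matrix.one_apply]
      try ring_nf
      try simp [Complex.I_sq]
      try ring

lemma betaM_alphaDot (v : EuclideanSpace ℝ (Fin 3)) :
    betaM * alphaDot v = - (alphaDot v * betaM) := by
  ext k l
  rcases k with k | k <;> rcases l with l | l <;> fin_cases k <;> fin_cases l <;>
    · simp [alphaDot, alphaM, pauli, betaM, Matrix.mul_apply, Fintype.sum_sum_type,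
        Fin.sum_univ_two, Fin.sum_univ_three, Matrix.fromBlocks, Matrix.sum_apply]
      try ring

lemma alphaM_sq_sum : ∑ j : Fin 3, alphaM j * alphaM j = (3:ℂ) • 1 := by
  ext k l
  rcases k with k | k <;> rcases l with l | l <;> fin_cases k <;> fin_cases l <;>
    · simp [alphaM, pauli, Matrix.mul_apply, Fintype.sum_sum_type, Fin.sum_univ_two,
        Fin.sum_univ_three, Matrix.fromBlocks, Matrix.sum_apply, Matrix.one_apply]
      try ring_nf
      try simp [Complex.I_sq]
      try ring

lemma betaM_alphaM (j : Fin 3) : betaM * alphaM j = - (alphaM j * betaM) := by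
  ext k l
  fin_cases j <;> rcases k with k | k <;> rcases l with l | l <;> fin_cases k <;> fin_cases l <;>
    simp [alphaM, pauli, betaM, Matrix.mul_apply, Fintype.sum_sum_type,
      Fin.sum_univ_two, Matrix.fromBlocks]


lemma alphaDot_betaM (v : EuclideanSpace ℝ (Fin 3)) :
    alphaDot v * betaM = - (betaM * alphaDot v) := by
  rw [betaM_alphaDot, neg_neg]

lemma phiFS_eq (m a : ℝ) (x : EuclideanSpace ℝ (Fin 3)) :
    phiFS m a x =
      ((uu (Real.sqrt (m^2-a^2)) ‖x‖ : ℝ):ℂ) •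
        ((a:ℂ) • (1 : Matrix (Fin 2 ⊕ Fin 2) (Fin 2 ⊕ Fin 2) ℂ) + (m:ℂ) • betaM) +
      (((uu (Real.sqrt (m^2-a^2)) ‖x‖ : ℝ):ℂ) * ((gg (Real.sqrt (m^2-a^2)) ‖x‖ : ℝ):ℂ) *
        Complex.I) • alphaDot x := by
  simp only [phiFS, uu, gg, neg_mul]
  module


/-- For `m > 0`, `a ∈ [-m,m]` and `x ≠ 0`,
`(-iα·∇ + mβ - a)φ^a(x) = 0`: each column of `φ^a` solves the free Dirac equation away
from the origin (the partial derivatives `∂ⱼφ^a` are taken entrywise). -/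
theorem statement12 (m a : ℝ) (hm : 0 < m) (ha : a ∈ Set.Icc (-m) m)
    (x : EuclideanSpace ℝ (Fin 3)) (hx : x ≠ 0) :
    (-Complex.I) • (∑ j : Fin 3, alphaM j *
        Matrix.of fun k l : Fin 2 ⊕ Fin 2 =>
          fderiv ℝ (fun y => phiFS m a y k l) x (EuclideanSpace.single j 1))
      + (m : ℂ) • (betaM * phiFS m a x) - (a : ℂ) • phiFS m a x = 0 := by
  have hr0 : ‖x‖ ≠ 0 := norm_ne_zero_iff.mpr hx
  rw [phiFS_eq m a x]
  set κ := Real.sqrt (m^2 - a^2) with hκdef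
  set r := ‖x‖ with hrdef
  set A : Matrix (Fin 2 ⊕ Fin 2) (Fin 2 ⊕ Fin 2) ℂ := (a:ℂ) • 1 + (m:ℂ) • betaM with hA
  set P : ℂ := ((uu' κ r / r : ℝ) : ℂ) with hP
  set Q : ℂ := (((uu' κ r * gg κ r + uu κ r * gg' κ r) / r : ℝ) : ℂ) with hQ
  set s : ℂ := ((uu κ r * gg κ r : ℝ) : ℂ) with hs
  set c : ℂ := ((uu κ r : ℝ):ℂ) with hc
  set t : ℂ := ((gg κ r : ℝ):ℂ) with ht
  have hD : ∀ j : Fin 3,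
      (Matrix.of fun k l : Fin 2 ⊕ Fin 2 =>
          fderiv ℝ (fun y => phiFS m a y k l) x (EuclideanSpace.single j 1))
        = ((x j : ℂ) * P) • A + ((x j : ℂ) * Q * Complex.I) • alphaDot x
          + (s * Complex.I) • alphaM j := by
    intro j
    ext k l
    simp only [Matrix.of_apply, Matrix.add_apply, Matrix.smul_apply, smul_eq_mul, hA]
    rw [fderiv_phiFS m a x hx j k l, ← hκdef, ← hrdef, hP, hQ, hs]
    push_cast
    ring
  rw [Finset.sum_congr rfl fun j (_ : j ∈ Finset.univ) => by rw [hD j]]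
  have e1 : ∀ M : Matrix (Fin 2 ⊕ Fin 2) (Fin 2 ⊕ Fin 2) ℂ,
      (∑ j : Fin 3, ((x j : ℂ) * P) • (alphaM j * M)) = P • (alphaDot x * M) := by
    intro M
    rw [alphaDot, Finset.sum_mul, Finset.smul_sum]
    refine Finset.sum_congr rfl fun j _ => ?_
    rw [Matrix.smul_mul, smul_smul]
    congr 1
    ring
  have e2 : ∀ M : Matrix (Fin 2 ⊕ Fin 2) (Fin 2 ⊕ Fin 2) ℂ,
      (∑ j : Fin 3, ((x j : ℂ) * Q * Complex.I) • (alphaM j * M))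
        = (Q * Complex.I) • (alphaDot x * M) := by
    intro M
    rw [alphaDot, Finset.sum_mul, Finset.smul_sum]
    refine Finset.sum_congr rfl fun j _ => ?_
    rw [Matrix.smul_mul, smul_smul]
    congr 1
    ring
  have hsum : (∑ j : Fin 3, alphaM j * (((x j : ℂ) * P) • A
        + ((x j : ℂ) * Q * Complex.I) • alphaDot x + (s * Complex.I) • alphaM j))
      = P • (alphaDot x * A) + (Q * Complex.I) • (alphaDot x * alphaDot x)
        + (s * Complex.I) • ((3:ℂ) • (1 : Matrix (Fin 2 ⊕ Fin 2) (Fin 2 ⊕ Fin 2) ℂ)) := by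
    rw [← alphaM_sq_sum, ← e1 A, ← e2 (alphaDot x), Finset.smul_sum]
    rw [← Finset.sum_add_distrib, ← Finset.sum_add_distrib]
    refine Finset.sum_congr rfl fun j _ => ?_
    simp only [mul_add, Matrix.mul_smul]
  rw [hsum, alphaDot_sq x]
  have hR2 : (∑ j : Fin 3, ((x j : ℂ))^2) = ((r:ℝ):ℂ)^2 := by
    have hre : (∑ j : Fin 3, (x j)^2) = r^2 := by
      rw [hrdef, EuclideanSpace.norm_eq, Real.sq_sqrt]
      · simp [Real.norm_eq_abs, sq_abs]
      · positivity
    have h := congrArg (Complex.ofReal) hre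
    push_cast at h
    exact h
  rw [hR2]
  simp only [hA, mul_add, Matrix.mul_smul, Matrix.mul_one, betaM_sq, alphaDot_betaM,
    smul_neg, smul_add, smul_smul]
  have hκ2 : ((κ:ℝ):ℂ)^2 = (m:ℂ)^2 - (a:ℂ)^2 := by
    have h : κ^2 = m^2 - a^2 := Real.sq_sqrt (by nlinarith [ha.1, ha.2])
    have h2 := congrArg (Complex.ofReal) h
    push_cast at h2
    exact h2
  have hrC : ((r:ℝ):ℂ) ≠ 0 := Complex.ofReal_ne_zero.mpr hr0
  have hπC : ((π:ℝ):ℂ) ≠ 0 := Complex.ofReal_ne_zero.mpr Real.pi_ne_zero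
  have key1R : uu' κ r / r + uu κ r * gg κ r = 0 := by
    rw [uu', uu, gg]
    field_simp
    ring
  have key1 : P + c * t = 0 := by
    rw [hP, hc, ht]
    have h := congrArg (Complex.ofReal) key1R
    push_cast at h ⊢
    linear_combination h
  have key2R : (uu' κ r * gg κ r + uu κ r * gg' κ r) / r * r^2 + 3*(uu κ r * gg κ r)
      + κ^2 * uu κ r = 0 := by
    rw [uu', uu, gg, gg']
    field_simp
    ring
  have key2 : Q * ((r:ℝ):ℂ)^2 + 3 * s + (((m:ℂ)^2 - (a:ℂ)^2)) * c = 0 := by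
    rw [hQ, hs, hc, ← hκ2]
    have h := congrArg (Complex.ofReal) key2R
    push_cast at h ⊢
    linear_combination h
  match_scalars
  · linear_combination (-Complex.I * (a:ℂ)) * key1
  · linear_combination (Complex.I * (m:ℂ)) * key1
  · linear_combination key2 - (Q * ((r:ℝ):ℂ)^2 + 3 * s) * Complex.I_sq
  · ring
end

section
/- Let m > 0 and fix x ∈ ℝ³ \ {0}. The map a ↦ φ^a(x) is differentiable on (−m,m), and its derivative at a equals (a·e^{−κ|x|}/(4πκ))·(a·I₄ + mβ + iκ·α·x/|x|) + (e^{−κ|x|}/(4π|x|))·I₄, where κ = √(m² − a²). -/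
open scoped Real Matrix

/-- For `m > 0`, `x ≠ 0` and `a ∈ (-m,m)`, the map `a ↦ φ^a(x)` is
differentiable (entrywise) with derivative
`(a e^{-κ|x|}/(4πκ)) (a·I₄ + mβ + iκ α·x/|x|) + (e^{-κ|x|}/(4π|x|))·I₄`,
where `κ = √(m² - a²)`. -/
theorem statement19 (m : ℝ) (hm : 0 < m) (x : EuclideanSpace ℝ (Fin 3)) (hx : x ≠ 0)
    (a : ℝ) (ha : a ∈ Set.Ioo (-m) m) :
    ∀ k l : Fin 2 ⊕ Fin 2,
      HasDerivAt (fun b : ℝ => phiFS m b x k l)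
        ((((a * Real.exp (-(Real.sqrt (m ^ 2 - a ^ 2)) * ‖x‖) /
              (4 * π * Real.sqrt (m ^ 2 - a ^ 2)) : ℝ) : ℂ) •
            ((a : ℂ) • (1 : Matrix (Fin 2 ⊕ Fin 2) (Fin 2 ⊕ Fin 2) ℂ) +
              (m : ℂ) • betaM +
              ((Real.sqrt (m ^ 2 - a ^ 2) : ℝ) : ℂ) •
                Complex.I • (((‖x‖⁻¹ : ℝ) : ℂ) • alphaDot x)) +
          ((Real.exp (-(Real.sqrt (m ^ 2 - a ^ 2)) * ‖x‖) / (4 * π * ‖x‖) : ℝ) : ℂ) •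
            (1 : Matrix (Fin 2 ⊕ Fin 2) (Fin 2 ⊕ Fin 2) ℂ)) k l) a := by
  intro k l
  obtain ⟨ha1, ha2⟩ := ha
  have hx0 : (0:ℝ) < ‖x‖ := norm_pos_iff.mpr hx
  have hsq : (0:ℝ) < m ^ 2 - a ^ 2 := by nlinarith
  set κ : ℝ := Real.sqrt (m ^ 2 - a ^ 2) with hκdef
  have hκ0 : (0:ℝ) < κ := Real.sqrt_pos.mpr hsq
  -- derivative of b ↦ √(m² - b²) at a
  have h1 : HasDerivAt (fun b : ℝ => m ^ 2 - b ^ 2) (-(2 * a)) a := by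
    simpa using (hasDerivAt_pow 2 a).const_sub (m ^ 2)
  have hκ : HasDerivAt (fun b : ℝ => Real.sqrt (m ^ 2 - b ^ 2)) (-a / κ) a := by
    have := (Real.hasDerivAt_sqrt (ne_of_gt hsq)).comp a h1
    refine this.congr_deriv (Eq.symm ?_)
    rw [← hκdef]
    field_simp
  -- the scalar coefficients
  set c : ℝ → ℝ := fun b =>
    Real.exp (-(Real.sqrt (m ^ 2 - b ^ 2)) * ‖x‖) / (4 * π * ‖x‖) with hcdef
  set d : ℝ → ℝ := fun b =>
    (1 + Real.sqrt (m ^ 2 - b ^ 2) * ‖x‖) / ‖x‖ ^ 2 with hddef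
  have hc : HasDerivAt c (Real.exp (-κ * ‖x‖) * (-(-a / κ) * ‖x‖) / (4 * π * ‖x‖)) a :=
    ((hκ.neg.mul_const ‖x‖).exp).div_const _
  have hd : HasDerivAt d ((-a / κ * ‖x‖) / ‖x‖ ^ 2) a := by
    exact (((hκ.mul_const ‖x‖).const_add 1).div_const _)
  -- entries
  set e1 : ℂ := (1 : Matrix (Fin 2 ⊕ Fin 2) (Fin 2 ⊕ Fin 2) ℂ) k l with he1
  set e2 : ℂ := betaM k l with he2
  set e3 : ℂ := alphaDot x k l with he3
  have hfun : (fun b : ℝ => phiFS m b x k l) =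
      fun b : ℝ => (c b : ℂ) * ((b : ℂ) * e1 + (m : ℂ) * e2 + (d b : ℂ) * (Complex.I * e3)) := by
    funext b
    simp [phiFS, Matrix.add_apply, Matrix.smul_apply, smul_eq_mul, hcdef, hddef, he1, he2, he3,
      mul_assoc]
  rw [hfun]
  have hb : HasDerivAt (fun b : ℝ => ((b : ℂ) * e1 + (m : ℂ) * e2 + (d b : ℂ) * (Complex.I * e3)))
      ((1 : ℂ) * e1 + (((-a / κ * ‖x‖) / ‖x‖ ^ 2 : ℝ) : ℂ) * (Complex.I * e3)) a := by
    have hb1 : HasDerivAt (fun b : ℝ => (b : ℂ) * e1) ((1:ℂ) * e1) a := by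
      exact ((hasDerivAt_id a).ofReal_comp).mul_const e1
    have hb2 : HasDerivAt (fun b : ℝ => (d b : ℂ) * (Complex.I * e3))
        ((((-a / κ * ‖x‖) / ‖x‖ ^ 2 : ℝ) : ℂ)  * (Complex.I * e3)) a :=
      (hd.ofReal_comp).mul_const _
    exact (hb1.add_const ((m:ℂ) * e2)).add hb2
  have hc' : HasDerivAt c (a * Real.exp (-κ * ‖x‖) / (4 * π * κ)) a := by
    convert hc using 1
    have hπ : (π : ℝ) ≠ 0 := Real.pi_ne_zero
    field_simp
  have hF := (hc'.ofReal_comp).mul hb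
  refine hF.congr_deriv (Eq.symm ?_)
  have hca : c a = Real.exp (-κ * ‖x‖) / (4 * π * ‖x‖) := by simp [hcdef, hκdef]
  have hda : d a = (1 + κ * ‖x‖) / ‖x‖ ^ 2 := by simp [hddef, hκdef]
  simp only [Matrix.add_apply, Matrix.smul_apply, smul_eq_mul, ← he1, ← he2, ← he3, hca, hda]
  have hπ : (π : ℝ) ≠ 0 := Real.pi_ne_zero
  have hxne : (‖x‖ : ℝ) ≠ 0 := ne_of_gt hx0
  have hκne : κ ≠ 0 := ne_of_gt hκ0
  have key : (a * Real.exp (-κ * ‖x‖) / (4 * π * κ)) * ((1 + κ * ‖x‖) / ‖x‖ ^ 2)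
      + (Real.exp (-κ * ‖x‖) / (4 * π * ‖x‖)) * (-a / κ * ‖x‖ / ‖x‖ ^ 2)
      = (a * Real.exp (-κ * ‖x‖) / (4 * π * κ)) * (κ * ‖x‖⁻¹) := by
    field_simp
    ring
  have keyC := congrArg (fun t : ℝ => (t : ℂ)) key
  have hXX : ((‖x‖ : ℝ) : ℂ) * ((‖x‖ : ℝ) : ℂ)⁻¹ = 1 :=
    mul_inv_cancel₀ (Complex.ofReal_ne_zero.mpr hxne)
  push_cast at keyC ⊢
  linear_combination (Complex.I * e3) * keyC -
    ((a : ℂ) * Complex.exp (-(κ : ℂ) * (‖x‖ : ℂ)) * ((π : ℝ) : ℂ)⁻¹ * ((κ : ℝ) : ℂ)⁻¹ *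
        Complex.I * e3 / 2) * ((κ : ℂ) * ((‖x‖ : ℝ) : ℂ)⁻¹ - (((‖x‖ : ℝ) : ℂ)⁻¹) ^ 2) * hXX
end
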